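/- arXiv:2202.12410 — 13 statements merged into one kernel-verified Lean document; each statement's English description precedes it below -/
import Mathlib

section
/- Let A(z) = A_0 + A_1 z be a linear operator pencil with A_0, A_1 ∈ L(H,K). Suppose {R_j}_{j∈ℤ} ⊆ L(K,H) are geometrically bounded (‖R_j‖ ≤ c/(r-δ)^j and ‖R_{-j}‖ ≤ d(s+ε)^j for suitable constants whenever s < s+ε < r-δ < r) and satisfy the left fundamental equations R_{j-1}A_1 + R_j A_0 = δ_{j,0} I and the right fundamental equations A_1 R_{j-1} + A_0 R_j = δ_{j,0} I for all j ∈ ℤ. Then R(z) = Σ_{j∈ℤ} R_j z^j converges on the annulus U_{s,r} and satisfies R(z)A(z) = I and A(z)R(z) = I for all z ∈ U_{s,r}. -/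
/-!
The bounds on `R j` for `j ≥ 0` and `j < 0` dominate the two tails of `Σ z^j R_j` by geometric
series as soon as `s < |z| < r`, so the Laurent series converges absolutely there. Multiplying it by
`A(z) = A₀ + z A₁` and shifting the index of the `z A₁` part by one, the coefficient of `z^j` becomes
the left-hand side of the `j`-th fundamental equation; only the `j = 0` term, the identity, survives.
-/

open ContinuousLinearMap

section LaurentShift

variable {𝕜 G : Type*} [Field 𝕜] [AddCommGroup G] [Module 𝕜 G] [TopologicalSpace G]
  [ContinuousConstSMul 𝕜 G] {z : 𝕜} {f f₀ f₁ : ℤ → G} {S S₀ S₁ : G}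

theorem HasSum.zpow_smul_sub_one (hz : z ≠ 0) (h : HasSum (fun j : ℤ => z ^ j • f j) S) :
    HasSum (fun j : ℤ => z ^ j • f (j - 1)) (z • S) := by
  rw [← (Equiv.addRight (1 : ℤ)).hasSum_iff]
  convert h.const_smul z using 2 with j
  simp [smul_smul, zpow_add_one₀ hz, mul_comm]

theorem add_smul_eq_of_hasSum_zpow_smul [ContinuousAdd G] [T2Space G] (hz : z ≠ 0) {e : G}
    (h₀ : HasSum (fun j : ℤ => z ^ j • f₀ j) S₀) (h₁ : HasSum (fun j : ℤ => z ^ j • f₁ j) S₁)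
    (heq : ∀ j : ℤ, f₁ (j - 1) + f₀ j = if j = 0 then e else 0) :
    S₀ + z • S₁ = e := by
  have hsum := (h₁.zpow_smul_sub_one hz).add h₀
  simp_rw [← smul_add, heq] at hsum
  rw [add_comm]
  refine hsum.unique ?_
  convert hasSum_ite_eq (0 : ℤ) e using 2 with j
  split_ifs with hj <;> simp [hj]

end LaurentShift

theorem HasSum.comp_continuousLinearMap {𝕜 ι E F G : Type*} [NontriviallyNormedField 𝕜]
    [SeminormedAddCommGroup E] [SeminormedAddCommGroup F] [SeminormedAddCommGroup G]
    [NormedSpace 𝕜 E] [NormedSpace 𝕜 F] [NormedSpace 𝕜 G]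
    {f : ι → F →L[𝕜] G} {S : F →L[𝕜] G} (h : HasSum f S) (B : E →L[𝕜] F) :
    HasSum (fun i => (f i).comp B) (S.comp B) :=
  h.mapL ((compL 𝕜 E F G).flip B)

theorem HasSum.continuousLinearMap_comp {𝕜 ι E F G : Type*} [NontriviallyNormedField 𝕜]
    [SeminormedAddCommGroup E] [SeminormedAddCommGroup F] [SeminormedAddCommGroup G]
    [NormedSpace 𝕜 E] [NormedSpace 𝕜 F] [NormedSpace 𝕜 G]
    {f : ι → E →L[𝕜] F} {S : E →L[𝕜] F} (h : HasSum f S) (B : F →L[𝕜] G) :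
    HasSum (fun i => B.comp (f i)) (B.comp S) :=
  h.mapL (compL 𝕜 E F G B)

theorem summable_norm_zpow_smul_of_geometric_bounds {E : Type*} [SeminormedAddCommGroup E]
    [NormedSpace ℂ E] {f : ℤ → E} {z : ℂ} {c d σ ρ : ℝ} (hσ : 0 ≤ σ) (hσz : σ < ‖z‖)
    (hzρ : ‖z‖ < ρ) (hpos : ∀ n : ℕ, ‖f n‖ ≤ c / ρ ^ n) (hneg : ∀ n : ℕ, ‖f (-n)‖ ≤ d * σ ^ n) :
    Summable (fun j : ℤ => ‖z ^ j • f j‖) := by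
  have hz : 0 < ‖z‖ := hσ.trans_lt hσz
  have hρ : 0 < ρ := hz.trans hzρ
  apply Summable.of_nat_of_neg
  · refine Summable.of_nonneg_of_le (fun _ => norm_nonneg _) (fun n => ?_)
      ((summable_geometric_of_lt_one (by positivity) ((div_lt_one hρ).2 hzρ)).mul_left c)
    calc ‖z ^ (n : ℤ) • f n‖ = ‖z‖ ^ n * ‖f n‖ := by simp [norm_smul]
      _ ≤ ‖z‖ ^ n * (c / ρ ^ n) := by gcongr; exact hpos n
      _ = c * (‖z‖ / ρ) ^ n := by rw [div_pow]; ring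
  · refine Summable.of_nonneg_of_le (fun _ => norm_nonneg _) (fun n => ?_)
      ((summable_geometric_of_lt_one (by positivity) ((div_lt_one hz).2 hσz)).mul_left d)
    calc ‖z ^ (-n : ℤ) • f (-n)‖ = ‖f (-n)‖ / ‖z‖ ^ n := by simp [norm_smul, div_eq_inv_mul]
      _ ≤ d * σ ^ n / ‖z‖ ^ n := by gcongr; exact hneg n
      _ = d * (σ / ‖z‖) ^ n := by rw [div_pow, mul_div_assoc]

theorem fundamental_equations_give_resolvent_general
    {H K : Type*} [NormedAddCommGroup H] [NormedSpace ℂ H] [CompleteSpace H]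
    [NormedAddCommGroup K] [NormedSpace ℂ K]
    (s r : ℝ) (hs : 0 ≤ s)
    (A₀ A₁ : H →L[ℂ] K) (R : ℤ → (K →L[ℂ] H))
    (hgb : ∀ δ ε : ℝ, 0 < δ → 0 < ε → s + ε < r - δ →
      ∃ c d : ℝ, 0 < c ∧ 0 < d ∧
        ∀ j : ℕ, ‖R (j : ℤ)‖ ≤ c / (r - δ) ^ j ∧ ‖R (-(j : ℤ))‖ ≤ d * (s + ε) ^ j)
    (hleft : ∀ j : ℤ, (R (j - 1)).comp A₁ + (R j).comp A₀ =
      if j = 0 then (1 : H →L[ℂ] H) else 0)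
    (hright : ∀ j : ℤ, A₁.comp (R (j - 1)) + A₀.comp (R j) =
      if j = 0 then (1 : K →L[ℂ] K) else 0) :
    ∀ z : ℂ, s < ‖z‖ → ‖z‖ < r →
      Summable (fun j : ℤ => z ^ j • R j) ∧
      (∑' j : ℤ, z ^ j • R j).comp (A₀ + z • A₁) = 1 ∧
      (A₀ + z • A₁).comp (∑' j : ℤ, z ^ j • R j) = 1 := by
  intro z hzs hzr
  have hz : z ≠ 0 := norm_pos_iff.1 (hs.trans_lt hzs)
  obtain ⟨c, d, -, -, hbd⟩ := hgb ((r - ‖z‖) / 2) ((‖z‖ - s) / 2)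
    (by linarith) (by linarith) (by linarith)
  have hsum : Summable (fun j : ℤ => z ^ j • R j) :=
    (summable_norm_zpow_smul_of_geometric_bounds (by linarith) (by linarith) (by linarith)
      (fun n => (hbd n).1) (fun n => (hbd n).2)).of_norm
  have hS := hsum.hasSum
  refine ⟨hsum, ?_, ?_⟩
  · rw [comp_add, comp_smul]
    exact add_smul_eq_of_hasSum_zpow_smul hz
      (by simpa only [smul_comp] using hS.comp_continuousLinearMap A₀)
      (by simpa only [smul_comp] using hS.comp_continuousLinearMap A₁) hleft
  · rw [add_comp, smul_comp]
    exact add_smul_eq_of_hasSum_zpow_smul hz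
      (by simpa only [comp_smul] using hS.continuousLinearMap_comp A₀)
      (by simpa only [comp_smul] using hS.continuousLinearMap_comp A₁) hright

/-- geometrically bounded solutions of the left and right fundamental equations
yield a convergent Laurent series `R(z) = Σ_{j∈ℤ} R_j z^j` on the annulus `U_{s,r}` which
inverts the pencil `A(z) = A₀ + A₁ z` on both sides. -/
theorem fundamental_equations_give_resolvent
    {H K : Type*} [NormedAddCommGroup H] [NormedSpace ℂ H] [CompleteSpace H]
    [NormedAddCommGroup K] [NormedSpace ℂ K] [CompleteSpace K]
    (s r : ℝ) (hs : 0 ≤ s) (hsr : s < r)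
    (A₀ A₁ : H →L[ℂ] K) (R : ℤ → (K →L[ℂ] H))
    (hgb : ∀ δ ε : ℝ, 0 < δ → 0 < ε → s + ε < r - δ →
      ∃ c d : ℝ, 0 < c ∧ 0 < d ∧
        ∀ j : ℕ, ‖R (j : ℤ)‖ ≤ c / (r - δ) ^ j ∧ ‖R (-(j : ℤ))‖ ≤ d * (s + ε) ^ j)
    (hleft : ∀ j : ℤ, (R (j - 1)).comp A₁ + (R j).comp A₀ =
      if j = 0 then (1 : H →L[ℂ] H) else 0)
    (hright : ∀ j : ℤ, A₁.comp (R (j - 1)) + A₀.comp (R j) =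
      if j = 0 then (1 : K →L[ℂ] K) else 0) :
    ∀ z : ℂ, s < ‖z‖ → ‖z‖ < r →
      Summable (fun j : ℤ => z ^ j • R j) ∧
      (∑' j : ℤ, z ^ j • R j).comp (A₀ + z • A₁) = 1 ∧
      (A₀ + z • A₁).comp (∑' j : ℤ, z ^ j • R j) = 1 :=
  fundamental_equations_give_resolvent_general s r hs A₀ A₁ R hgb hleft hright
end

section
/- Let A(z) = A_0 + A_1 z be a linear operator pencil. If {S_j}_{j∈ℤ} and {R_j}_{j∈ℤ} are two families of operators in L(K,H), both geometrically bounded on U_{s,r} and both satisfying the left and right fundamental equations, then S_j = R_j for all j ∈ ℤ. -/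
/-- uniqueness of geometrically bounded solutions of the fundamental equations. -/
theorem fundamental_equations_unique_solution
    {H K : Type*} [NormedAddCommGroup H] [NormedSpace ℂ H] [CompleteSpace H]
    [NormedAddCommGroup K] [NormedSpace ℂ K] [CompleteSpace K]
    (s r : ℝ) (hs : 0 ≤ s) (hsr : s < r)
    (A₀ A₁ : H →L[ℂ] K) (R S : ℤ → (K →L[ℂ] H))
    (hgbR : ∀ δ ε : ℝ, 0 < δ → 0 < ε → s + ε < r - δ →
      ∃ c d : ℝ, 0 < c ∧ 0 < d ∧
        ∀ j : ℕ, ‖R (j : ℤ)‖ ≤ c / (r - δ) ^ j ∧ ‖R (-(j : ℤ))‖ ≤ d * (s + ε) ^ j)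
    (hgbS : ∀ δ ε : ℝ, 0 < δ → 0 < ε → s + ε < r - δ →
      ∃ c d : ℝ, 0 < c ∧ 0 < d ∧
        ∀ j : ℕ, ‖S (j : ℤ)‖ ≤ c / (r - δ) ^ j ∧ ‖S (-(j : ℤ))‖ ≤ d * (s + ε) ^ j)
    (hleftR : ∀ j : ℤ, (R (j - 1)).comp A₁ + (R j).comp A₀ =
      if j = 0 then (1 : H →L[ℂ] H) else 0)
    (hrightR : ∀ j : ℤ, A₁.comp (R (j - 1)) + A₀.comp (R j) =
      if j = 0 then (1 : K →L[ℂ] K) else 0)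
    (hleftS : ∀ j : ℤ, (S (j - 1)).comp A₁ + (S j).comp A₀ =
      if j = 0 then (1 : H →L[ℂ] H) else 0)
    (hrightS : ∀ j : ℤ, A₁.comp (S (j - 1)) + A₀.comp (S j) =
      if j = 0 then (1 : K →L[ℂ] K) else 0) :
    ∀ j : ℤ, S j = R j := by
  intro j
  have hrs : 0 < r - s := by linarith
  set e : ℝ := (r - s) / 3 with he
  have hepos : 0 < e := by positivity
  obtain ⟨c, d, hc, hd, hR⟩ := hgbR e e hepos hepos (by rw [he]; linarith)
  obtain ⟨c', d', hc', hd', hS'⟩ := hgbS e e hepos hepos (by rw [he]; linarith)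
  set ρ : ℝ := s + e with hρdef
  set σ : ℝ := r - e with hσdef
  have hρpos : 0 < ρ := by rw [hρdef]; linarith
  have hσpos : 0 < σ := by rw [hσdef, he]; linarith
  have hρσ : ρ < σ := by rw [hρdef, hσdef, he]; linarith
  have hσne : σ ≠ 0 := ne_of_gt hσpos
  set G : ℤ → (K →L[ℂ] H) := fun k => (S (j - k)).comp (A₁.comp (R (k - 1))) with hG
  have key : ∀ k : ℤ, G (k + 1) - G k
      = (if k = j then R j else 0) - (if k = 0 then S j else 0) := by
    intro k
    have h1 := hleftS (j - k)
    have h2 := hrightR k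
    have e1 : ((S (j - k - 1)).comp A₁).comp (R k) + ((S (j - k)).comp A₀).comp (R k)
        = (if k = j then R j else 0) := by
      rw [← ContinuousLinearMap.add_comp, h1]
      by_cases hk : k = j
      · have : j - k = 0 := by omega
        simp [this, hk, ContinuousLinearMap.one_def, ContinuousLinearMap.id_comp]
      · have : j - k ≠ 0 := by omega
        simp [this, hk]
    have e2 : (S (j - k)).comp (A₁.comp (R (k - 1))) + (S (j - k)).comp (A₀.comp (R k))
        = (if k = 0 then S j else 0) := by
      rw [← ContinuousLinearMap.comp_add, h2]
      by_cases hk : k = 0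
      · simp [hk, ContinuousLinearMap.one_def, ContinuousLinearMap.comp_id]
      · simp [hk]
    have gk1 : G (k + 1) = ((S (j - k - 1)).comp A₁).comp (R k) := by
      rw [hG]
      simp only [show j - (k + 1) = j - k - 1 from by ring, show k + 1 - 1 = k from by ring]
      rw [ContinuousLinearMap.comp_assoc]
    have step : G (k + 1) - G k
        = (((S (j - k - 1)).comp A₁).comp (R k) + ((S (j - k)).comp A₀).comp (R k))
          - ((S (j - k)).comp (A₁.comp (R (k - 1))) + (S (j - k)).comp (A₀.comp (R k))) := by
      rw [gk1, hG]
      simp only [ContinuousLinearMap.comp_assoc]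
      abel
    rw [step, e1, e2]
  -- telescoping identity
  have tele : ∀ n : ℕ, j.natAbs ≤ n → S j - R j = G (-(n : ℤ)) - G ((n : ℤ) + 1) := by
    intro n hn
    have hsum := Finset.sum_range_sub (fun i : ℕ => G (-(n : ℤ) + i)) (2 * n + 1)
    have hterm : ∀ i : ℕ, G (-(n : ℤ) + (i + 1 : ℕ)) - G (-(n : ℤ) + i)
        = (if (-(n : ℤ) + i) = j then R j else 0)
          - (if (-(n : ℤ) + i) = 0 then S j else 0) := by
      intro i
      have hk := key (-(n : ℤ) + i)
      rw [show (-(n : ℤ) + ((i + 1 : ℕ) : ℤ)) = (-(n : ℤ) + i) + 1 by push_cast; ring]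
      exact hk
    simp only [hterm] at hsum
    rw [Finset.sum_sub_distrib] at hsum
    have hj1 : ∑ i ∈ Finset.range (2 * n + 1),
        (if (-(n : ℤ) + i) = j then R j else 0) = R j := by
      have hcg : ∀ i ∈ Finset.range (2 * n + 1), (if (-(n : ℤ) + i) = j then R j else 0)
          = (if i = (j + (n : ℤ)).toNat then R j else 0) := fun i _ =>
        if_congr (by omega) rfl rfl
      rw [Finset.sum_congr rfl hcg]
      rw [Finset.sum_ite_eq' (Finset.range (2 * n + 1)) ((j + (n : ℤ)).toNat)
        (fun _ => R j)]
      have : (j + (n : ℤ)).toNat ∈ Finset.range (2 * n + 1) := by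
        rw [Finset.mem_range]; omega
      simp [this]
    have hj2 : ∑ i ∈ Finset.range (2 * n + 1),
        (if (-(n : ℤ) + i) = 0 then S j else 0) = S j := by
      have hcg : ∀ i ∈ Finset.range (2 * n + 1), (if (-(n : ℤ) + i) = 0 then S j else 0)
          = (if i = n then S j else 0) := fun i _ => if_congr (by omega) rfl rfl
      rw [Finset.sum_congr rfl hcg]
      rw [Finset.sum_ite_eq' (Finset.range (2 * n + 1)) n (fun _ => S j)]
      have : n ∈ Finset.range (2 * n + 1) := by rw [Finset.mem_range]; omega
      simp [this]
    rw [hj1, hj2] at hsum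
    have hcast : (-(n : ℤ) + ((2 * n + 1 : ℕ) : ℤ)) = (n : ℤ) + 1 := by push_cast; ring
    rw [hcast] at hsum
    simp only [Nat.cast_zero, add_zero] at hsum
    have h' := congrArg Neg.neg hsum
    simp only [neg_sub] at h'
    exact h'
  -- bound boundary terms
  set q : ℝ := ρ / σ with hq
  have hq0 : 0 ≤ q := le_of_lt (div_pos hρpos hσpos)
  have hq1 : q < 1 := (div_lt_one hσpos).mpr hρσ
  set C1 : ℝ := c' * σ ^ (-j) * ‖A₁‖ * (d * ρ) with hC1
  set C2 : ℝ := d' * ρ ^ (1 - j) * ‖A₁‖ * c with hC2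
  have hbound : ∀ n : ℕ, j.natAbs ≤ n → ‖S j - R j‖ ≤ (C1 + C2) * q ^ n := by
    intro n hn
    rw [tele n hn]
    have bnd1 : ‖G (-(n : ℤ))‖ ≤ C1 * q ^ n := by
      have harg : j - (-(n : ℤ)) = (((j + (n : ℤ)).toNat : ℕ) : ℤ) := by omega
      have harg2 : (-(n : ℤ)) - 1 = -(((n + 1 : ℕ) : ℤ)) := by push_cast; ring
      have hSb := (hS' ((j + (n : ℤ)).toNat)).1
      have hRb := (hR (n + 1)).2
      have hnorm : ‖G (-(n : ℤ))‖ ≤ ‖S ((((j + (n : ℤ)).toNat : ℕ) : ℤ))‖ *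
          (‖A₁‖ * ‖R (-(((n + 1 : ℕ) : ℤ)))‖) := by
        rw [hG]
        simp only [harg, harg2]
        exact le_trans (ContinuousLinearMap.opNorm_comp_le _ _)
          (by gcongr; exact ContinuousLinearMap.opNorm_comp_le _ _)
      have hσpow : (σ : ℝ) ^ ((j + (n : ℤ)).toNat) = σ ^ j * σ ^ (n : ℤ) := by
        rw [← zpow_natCast, show (((j + (n : ℤ)).toNat : ℕ) : ℤ) = j + n from by omega,
          zpow_add₀ hσne]
      calc ‖G (-(n : ℤ))‖
          ≤ (c' / σ ^ ((j + (n : ℤ)).toNat)) * (‖A₁‖ * (d * ρ ^ (n + 1))) := by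
            apply le_trans hnorm
            gcongr
          _ = C1 * q ^ n := by
            rw [hC1, hσpow, hq, div_pow, zpow_neg]
            have hσn : (σ : ℝ) ^ (n : ℤ) = σ ^ n := zpow_natCast σ n
            rw [hσn]
            have h1 : (σ : ℝ) ^ j ≠ 0 := zpow_ne_zero _ hσne
            have h2 : (σ : ℝ) ^ n ≠ 0 := pow_ne_zero _ hσne
            field_simp
            try ring
    have bnd2 : ‖G ((n : ℤ) + 1)‖ ≤ C2 * q ^ n := by
      have harg : j - ((n : ℤ) + 1) = -(((((n : ℤ) + 1 - j).toNat : ℕ) : ℤ)) := by omega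
      have harg2 : ((n : ℤ) + 1) - 1 = ((n : ℕ) : ℤ) := by ring
      have hSb := (hS' (((n : ℤ) + 1 - j).toNat)).2
      have hRb := (hR n).1
      have hnorm : ‖G ((n : ℤ) + 1)‖ ≤ ‖S (-(((((n : ℤ) + 1 - j).toNat : ℕ) : ℤ)))‖ *
          (‖A₁‖ * ‖R ((n : ℕ) : ℤ)‖) := by
        rw [hG]
        simp only [harg, harg2]
        exact le_trans (ContinuousLinearMap.opNorm_comp_le _ _)
          (by gcongr; exact ContinuousLinearMap.opNorm_comp_le _ _)
      have hρpow : (ρ : ℝ) ^ (((n : ℤ) + 1 - j).toNat) = ρ ^ (1 - j) * ρ ^ (n : ℤ) := by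
        rw [← zpow_natCast, show ((((n : ℤ) + 1 - j).toNat : ℕ) : ℤ) = 1 - j + n from by omega,
          zpow_add₀ (ne_of_gt hρpos)]
      calc ‖G ((n : ℤ) + 1)‖
          ≤ (d' * ρ ^ (((n : ℤ) + 1 - j).toNat)) * (‖A₁‖ * (c / σ ^ n)) := by
            apply le_trans hnorm
            gcongr
          _ = C2 * q ^ n := by
            rw [hC2, hρpow, hq, div_pow]
            have hρn : (ρ : ℝ) ^ (n : ℤ) = ρ ^ n := zpow_natCast ρ n
            rw [hρn]
            have h2 : (σ : ℝ) ^ n ≠ 0 := pow_ne_zero _ hσne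
            field_simp
            try ring
    calc ‖G (-(n : ℤ)) - G ((n : ℤ) + 1)‖
        ≤ ‖G (-(n : ℤ))‖ + ‖G ((n : ℤ) + 1)‖ := norm_sub_le _ _
      _ ≤ C1 * q ^ n + C2 * q ^ n := add_le_add bnd1 bnd2
      _ = (C1 + C2) * q ^ n := by ring
  have htend : Filter.Tendsto (fun n : ℕ => (C1 + C2) * q ^ n) Filter.atTop (nhds 0) := by
    have := tendsto_pow_atTop_nhds_zero_of_lt_one hq0 hq1
    simpa using this.const_mul (C1 + C2)
  have hle : ‖S j - R j‖ ≤ 0 := by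
    refine ge_of_tendsto htend ?_
    filter_upwards [Filter.eventually_atTop.2 ⟨j.natAbs, fun n hn => hbound n hn⟩] with n h
    exact h
  have : S j - R j = 0 := by
    have := le_antisymm hle (norm_nonneg _)
    exact norm_eq_zero.mp this
  exact sub_eq_zero.mp this
end

section
/- Suppose {R_j}_{j∈ℤ} ⊆ L(K,H) satisfy the fundamental equations and the geometric bounds ‖R_{-j}‖ ≤ d_ε(s+ε)^j and ‖R_j‖ ≤ c_δ/(r-δ)^j for j ∈ ℕ (for every admissible ε, δ). Then R_{-k} A_0 R_ℓ = 0 for all k > 0 and ℓ ≥ 0. -/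
/-- under the fundamental equations and geometric bounds,
`R_{-k} A₀ R_ℓ = 0` for all `k > 0`, `ℓ ≥ 0`. -/
theorem key_product_vanishes
    {H K : Type*} [NormedAddCommGroup H] [NormedSpace ℂ H] [CompleteSpace H]
    [NormedAddCommGroup K] [NormedSpace ℂ K] [CompleteSpace K]
    (s r : ℝ) (hs : 0 ≤ s) (hsr : s < r)
    (A₀ A₁ : H →L[ℂ] K) (R : ℤ → (K →L[ℂ] H))
    (hgb : ∀ δ ε : ℝ, 0 < δ → 0 < ε → s + ε < r - δ →
      ∃ c d : ℝ, 0 < c ∧ 0 < d ∧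
        ∀ j : ℕ, ‖R (j : ℤ)‖ ≤ c / (r - δ) ^ j ∧ ‖R (-(j : ℤ))‖ ≤ d * (s + ε) ^ j)
    (hleft : ∀ j : ℤ, (R (j - 1)).comp A₁ + (R j).comp A₀ =
      if j = 0 then (1 : H →L[ℂ] H) else 0)
    (hright : ∀ j : ℤ, A₁.comp (R (j - 1)) + A₀.comp (R j) =
      if j = 0 then (1 : K →L[ℂ] K) else 0) :
    ∀ k ℓ : ℤ, 0 < k → 0 ≤ ℓ → ((R (-k)).comp A₀).comp (R ℓ) = 0 := by
  intro k ℓ hk hℓ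
  -- step lemma
  have step : ∀ k' ℓ' : ℤ, 0 < k' → 0 ≤ ℓ' →
      ((R (-k')).comp A₀).comp (R ℓ') =
        ((R (-(k' + 1))).comp A₀).comp (R (ℓ' + 1)) := by
    intro k' ℓ' hk' hℓ'
    have h1 := hleft (-k')
    rw [if_neg (by omega)] at h1
    have h2 := hright (ℓ' + 1)
    rw [if_neg (by omega)] at h2
    have e1 : (R (-k')).comp A₀ = -((R (-k' - 1)).comp A₁) := by
      have := eq_neg_of_add_eq_zero_right h1
      rw [this]
    have e2 : A₁.comp (R ℓ') = -(A₀.comp (R (ℓ' + 1))) := by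
      have h2' : A₁.comp (R (ℓ' + 1 - 1)) + A₀.comp (R (ℓ' + 1)) = 0 := h2
      simp only [add_sub_cancel_right] at h2'
      exact eq_neg_of_add_eq_zero_left h2'
    rw [e1]
    have : -(k' + 1) = -k' - 1 := by ring
    rw [this]
    rw [ContinuousLinearMap.neg_comp, ContinuousLinearMap.comp_assoc, e2,
      ContinuousLinearMap.comp_neg, neg_neg, ← ContinuousLinearMap.comp_assoc]
  -- shift invariance
  have shift : ∀ n : ℕ, ((R (-k)).comp A₀).comp (R ℓ) =
      ((R (-(k + n))).comp A₀).comp (R (ℓ + n)) := by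
    intro n
    induction n with
    | zero => simp
    | succ n ih =>
      rw [ih, step (k + n) (ℓ + n) (by omega) (by omega)]
      congr 2 <;> push_cast <;> ring_nf
  -- choose ε = δ = (r - s)/4
  set ε := (r - s) / 4 with hε
  have hεpos : 0 < ε := by rw [hε]; linarith
  have hlt : s + ε < r - ε := by simp only [hε]; linarith
  obtain ⟨c, d, hc, hd, hbound⟩ := hgb ε ε hεpos hεpos hlt
  set u := s + ε with hu
  set v := r - ε with hv
  have hupos : 0 < u := by rw [hu]; linarith
  have hvpos : 0 < v := lt_trans hupos hlt
  set a := k.toNat with ha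
  set b := ℓ.toNat with hb
  have hka : k = (a : ℤ) := by omega
  have hℓb : ℓ = (b : ℤ) := by omega
  set q := u / v with hq
  have hq01 : 0 < q ∧ q < 1 := ⟨div_pos hupos hvpos, (div_lt_one hvpos).mpr hlt⟩
  set C := d * u ^ a * ‖A₀‖ * c / v ^ b with hC
  have hbT : ∀ n : ℕ, ‖((R (-k)).comp A₀).comp (R ℓ)‖ ≤ C * q ^ n := by
    intro n
    have h1 : ‖((R (-k)).comp A₀).comp (R ℓ)‖ ≤ ‖R (-(k + n))‖ * ‖A₀‖ * ‖R (ℓ + n)‖ := by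
      rw [shift n]
      calc ‖((R (-(k + n))).comp A₀).comp (R (ℓ + n))‖
          ≤ ‖(R (-(k + n))).comp A₀‖ * ‖R (ℓ + n)‖ :=
            ContinuousLinearMap.opNorm_comp_le _ _
        _ ≤ ‖R (-(k + n))‖ * ‖A₀‖ * ‖R (ℓ + n)‖ := by
            gcongr; exact ContinuousLinearMap.opNorm_comp_le _ _
    have h2 : ‖R (-(k + n))‖ ≤ d * u ^ (a + n) := by
      have : -(k + (n : ℤ)) = -(((a + n : ℕ) : ℤ)) := by push_cast; omega
      rw [this]
      exact (hbound (a + n)).2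
    have h3 : ‖R (ℓ + n)‖ ≤ c / v ^ (b + n) := by
      have : ℓ + (n : ℤ) = ((b + n : ℕ) : ℤ) := by push_cast; omega
      rw [this]
      exact (hbound (b + n)).1
    have h4 : ‖((R (-k)).comp A₀).comp (R ℓ)‖ ≤ d * u ^ (a + n) * ‖A₀‖ * (c / v ^ (b + n)) := by
      calc ‖((R (-k)).comp A₀).comp (R ℓ)‖ ≤ ‖R (-(k + n))‖ * ‖A₀‖ * ‖R (ℓ + n)‖ := h1
        _ ≤ d * u ^ (a + n) * ‖A₀‖ * (c / v ^ (b + n)) := by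
            gcongr
    have heq : d * u ^ (a + n) * ‖A₀‖ * (c / v ^ (b + n)) = C * q ^ n := by
      rw [hC, hq, pow_add, pow_add, div_pow]
      field_simp
    linarith [h4, heq ▸ h4]
  have htend : Filter.Tendsto (fun n : ℕ => C * q ^ n) Filter.atTop (nhds 0) := by
    have : Filter.Tendsto (fun n : ℕ => q ^ n) Filter.atTop (nhds 0) :=
      tendsto_pow_atTop_nhds_zero_of_lt_one (le_of_lt hq01.1) hq01.2
    simpa using this.const_mul C
  have hnorm : ‖((R (-k)).comp A₀).comp (R ℓ)‖ ≤ 0 := ge_of_tendsto' htend hbT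
  exact norm_eq_zero.mp (le_antisymm hnorm (norm_nonneg _))
end

section
/- Suppose {R_j}_{j∈ℤ} ⊆ L(K,H) satisfy the fundamental equations and the geometric bounds on U_{s,r}. Then P = R_{-1}A_1 ∈ L(H) is a projection (P² = P) with complementary projection I - P = R_0 A_0, and Q = A_1 R_{-1} ∈ L(K) is a projection with complementary projection I - Q = A_0 R_0. -/
/-!
For `j ≠ 0` the fundamental equations let one move a factor `A₁` from one side of
`A₀` to the other, so `R₋₍ₖ₊₁₎ A₀ Rₖ` does not depend on `k`, and neither does `Rₖ A₀ R₋₍ₖ₊₁₎`.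
The geometric bounds make their norms decay like `((s + ε) / (r - ε)) ^ k`, so both vanish, and
in particular `R₋₁ A₀ R₀ = 0 = R₀ A₀ R₋₁`. With the equations at `j = 0` this gives
`P² = R₋₁ (1 - A₀ R₀) A₁ = P` and `Q² = A₁ (1 - R₀ A₀) R₋₁ = Q`.
-/

open Filter Topology

theorem tendsto_norm_neg_mul_norm_nonneg {E : Type*} [SeminormedAddCommGroup E]
    {s r : ℝ} (hs : 0 ≤ s) (hsr : s < r) {R : ℤ → E}
    (hgb : ∀ δ ε : ℝ, 0 < δ → 0 < ε → s + ε < r - δ →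
      ∃ c d : ℝ, 0 < c ∧ 0 < d ∧
        ∀ j : ℕ, ‖R (j : ℤ)‖ ≤ c / (r - δ) ^ j ∧ ‖R (-(j : ℤ))‖ ≤ d * (s + ε) ^ j) :
    Tendsto (fun k : ℕ => ‖R (-(k + 1))‖ * ‖R k‖) atTop (𝓝 0) := by
  obtain ⟨ε, hε, hlt⟩ : ∃ ε > 0, s + ε < r - ε := ⟨(r - s) / 3, by linarith, by linarith⟩
  obtain ⟨c, d, hc, hd, hb⟩ := hgb ε ε hε hε hlt
  have hq₀ : 0 ≤ (s + ε) / (r - ε) := div_nonneg (by linarith) (by linarith)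
  have hq₁ : (s + ε) / (r - ε) < 1 := (div_lt_one (by linarith)).2 hlt
  have hbound (k : ℕ) :
      ‖R (-(k + 1))‖ * ‖R k‖ ≤ d * (s + ε) * c * ((s + ε) / (r - ε)) ^ k := by
    have hneg : ‖R (-(k + 1))‖ ≤ d * (s + ε) ^ (k + 1) := by exact_mod_cast (hb (k + 1)).2
    calc ‖R (-(k + 1))‖ * ‖R k‖ ≤ d * (s + ε) ^ (k + 1) * (c / (r - ε) ^ k) :=
          mul_le_mul hneg (hb k).1 (norm_nonneg _) (by positivity)
      _ = d * (s + ε) * c * ((s + ε) / (r - ε)) ^ k := by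
          rw [pow_succ, div_pow]; ring
  refine squeeze_zero (fun _ => by positivity) hbound ?_
  simpa using (tendsto_pow_atTop_nhds_zero_of_lt_one hq₀ hq₁).const_mul (d * (s + ε) * c)

namespace ContinuousLinearMap

variable {𝕜 H K : Type*} [NontriviallyNormedField 𝕜]
  [NormedAddCommGroup H] [NormedSpace 𝕜 H] [NormedAddCommGroup K] [NormedSpace 𝕜 K]

theorem isIdempotentElem_comp {f : H →L[𝕜] K} {g : K →L[𝕜] H} {h : K →L[𝕜] K}
    (hfg : f.comp g + h = 1) (hghf : g.comp (h.comp f) = 0) :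
    IsIdempotentElem (g.comp f) := by
  have hfg' : f.comp g = 1 - h := eq_sub_of_add_eq hfg
  calc (g.comp f).comp (g.comp f) = g.comp ((f.comp g).comp f) := rfl
    _ = g.comp f := by rw [hfg', sub_comp, comp_sub, hghf, sub_zero, one_def, id_comp]

theorem eq_zero_of_forall_eq_comp_comp {A : H →L[𝕜] K} {T : K →L[𝕜] H} {S U : ℕ → K →L[𝕜] H}
    (hSU : Tendsto (fun k => ‖S k‖ * ‖U k‖) atTop (𝓝 0))
    (hT : ∀ k, T = (S k).comp (A.comp (U k))) : T = 0 := by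
  have hu : Tendsto (fun k => ‖A‖ * (‖S k‖ * ‖U k‖)) atTop (𝓝 0) := by
    simpa using hSU.const_mul ‖A‖
  refine norm_le_zero_iff.1 (ge_of_tendsto' hu fun k => ?_)
  calc ‖T‖ = ‖(S k).comp (A.comp (U k))‖ := by rw [← hT k]
    _ ≤ ‖S k‖ * (‖A‖ * ‖U k‖) :=
      (opNorm_comp_le _ _).trans (mul_le_mul_of_nonneg_left (opNorm_comp_le _ _) (norm_nonneg _))
    _ = ‖A‖ * (‖S k‖ * ‖U k‖) := by ring

variable {A₀ A₁ : H →L[𝕜] K} {R : ℤ → K →L[𝕜] H}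

theorem neg_comp_A₀_comp_nonneg_eq
    (hleft : ∀ j : ℤ, j ≠ 0 → (R (j - 1)).comp A₁ + (R j).comp A₀ = 0)
    (hright : ∀ j : ℤ, j ≠ 0 → A₁.comp (R (j - 1)) + A₀.comp (R j) = 0) (k : ℕ) :
    (R (-(k + 1))).comp (A₀.comp (R k)) = (R (-1)).comp (A₀.comp (R 0)) := by
  induction k with
  | zero => simp
  | succ k ih =>
    have hAR : A₀.comp (R (k + 1)) = -A₁.comp (R k) :=
      eq_neg_of_add_eq_zero_right (by simpa using hright (k + 1) (by omega))
    have hRA : (R (-(k + 1) - 1)).comp A₁ = -(R (-(k + 1))).comp A₀ :=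
      eq_neg_of_add_eq_zero_left (hleft (-(k + 1)) (by omega))
    calc (R (-((k + 1 : ℕ) + 1))).comp (A₀.comp (R (k + 1 : ℕ)))
        = -((R (-(k + 1) - 1)).comp A₁).comp (R k) := by
          push_cast
          rw [hAR, comp_neg, show -((k : ℤ) + 1 + 1) = -(k + 1) - 1 by ring, comp_assoc]
      _ = _ := by rw [hRA, neg_comp, neg_neg, comp_assoc, ih]

theorem nonneg_comp_A₀_comp_neg_eq
    (hleft : ∀ j : ℤ, j ≠ 0 → (R (j - 1)).comp A₁ + (R j).comp A₀ = 0)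
    (hright : ∀ j : ℤ, j ≠ 0 → A₁.comp (R (j - 1)) + A₀.comp (R j) = 0) (k : ℕ) :
    (R k).comp (A₀.comp (R (-(k + 1)))) = (R 0).comp (A₀.comp (R (-1))) := by
  induction k with
  | zero => simp
  | succ k ih =>
    have hRA : (R (k + 1)).comp A₀ = -(R k).comp A₁ :=
      eq_neg_of_add_eq_zero_right (by simpa using hleft (k + 1) (by omega))
    have hAR : A₁.comp (R (-(k + 1) - 1)) = -A₀.comp (R (-(k + 1))) :=
      eq_neg_of_add_eq_zero_left (hright (-(k + 1)) (by omega))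
    calc (R (k + 1 : ℕ)).comp (A₀.comp (R (-((k + 1 : ℕ) + 1))))
        = -(R k).comp (A₁.comp (R (-(k + 1) - 1))) := by
          push_cast
          rw [← comp_assoc, hRA, neg_comp, show -((k : ℤ) + 1 + 1) = -(k + 1) - 1 by ring,
            comp_assoc]
      _ = _ := by rw [hAR, comp_neg, neg_neg, ih]

end ContinuousLinearMap

open ContinuousLinearMap in
theorem complementary_projections_general
    {H K : Type*} [NormedAddCommGroup H] [NormedSpace ℂ H]
    [NormedAddCommGroup K] [NormedSpace ℂ K]
    (s r : ℝ) (hs : 0 ≤ s) (hsr : s < r)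
    (A₀ A₁ : H →L[ℂ] K) (R : ℤ → (K →L[ℂ] H))
    (hgb : ∀ δ ε : ℝ, 0 < δ → 0 < ε → s + ε < r - δ →
      ∃ c d : ℝ, 0 < c ∧ 0 < d ∧
        ∀ j : ℕ, ‖R (j : ℤ)‖ ≤ c / (r - δ) ^ j ∧ ‖R (-(j : ℤ))‖ ≤ d * (s + ε) ^ j)
    (hleft : ∀ j : ℤ, (R (j - 1)).comp A₁ + (R j).comp A₀ =
      if j = 0 then (1 : H →L[ℂ] H) else 0)
    (hright : ∀ j : ℤ, A₁.comp (R (j - 1)) + A₀.comp (R j) =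
      if j = 0 then (1 : K →L[ℂ] K) else 0) :
    IsIdempotentElem ((R (-1)).comp A₁) ∧
    1 - (R (-1)).comp A₁ = (R 0).comp A₀ ∧
    IsIdempotentElem (A₁.comp (R (-1))) ∧
    1 - A₁.comp (R (-1)) = A₀.comp (R 0) := by
  have hleft_ne (j : ℤ) (hj : j ≠ 0) : (R (j - 1)).comp A₁ + (R j).comp A₀ = 0 := by
    simpa [hj] using hleft j
  have hright_ne (j : ℤ) (hj : j ≠ 0) : A₁.comp (R (j - 1)) + A₀.comp (R j) = 0 := by
    simpa [hj] using hright j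
  have hdecay := tendsto_norm_neg_mul_norm_nonneg hs hsr hgb
  have hP : (R (-1)).comp (A₀.comp (R 0)) = 0 := eq_zero_of_forall_eq_comp_comp hdecay
    fun k => (neg_comp_A₀_comp_nonneg_eq hleft_ne hright_ne k).symm
  have hQ : (R 0).comp (A₀.comp (R (-1))) = 0 :=
    eq_zero_of_forall_eq_comp_comp (by simpa only [mul_comm] using hdecay)
      fun k => (nonneg_comp_A₀_comp_neg_eq hleft_ne hright_ne k).symm
  have h0l : (R (-1)).comp A₁ + (R 0).comp A₀ = 1 := by simpa using hleft 0
  have h0r : A₁.comp (R (-1)) + A₀.comp (R 0) = 1 := by simpa using hright 0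
  exact ⟨isIdempotentElem_comp h0r (by rw [← comp_assoc, hP, zero_comp]),
    (eq_sub_of_add_eq' h0l).symm,
    isIdempotentElem_comp h0l (by rw [comp_assoc, hQ, comp_zero]),
    (eq_sub_of_add_eq' h0r).symm⟩

/-- `P = R₋₁A₁` and `I - P = R₀A₀` are complementary projections on `H`, and
`Q = A₁R₋₁` and `I - Q = A₀R₀` are complementary projections on `K`. -/
theorem complementary_projections
    {H K : Type*} [NormedAddCommGroup H] [NormedSpace ℂ H] [CompleteSpace H]
    [NormedAddCommGroup K] [NormedSpace ℂ K] [CompleteSpace K]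
    (s r : ℝ) (hs : 0 ≤ s) (hsr : s < r)
    (A₀ A₁ : H →L[ℂ] K) (R : ℤ → (K →L[ℂ] H))
    (hgb : ∀ δ ε : ℝ, 0 < δ → 0 < ε → s + ε < r - δ →
      ∃ c d : ℝ, 0 < c ∧ 0 < d ∧
        ∀ j : ℕ, ‖R (j : ℤ)‖ ≤ c / (r - δ) ^ j ∧ ‖R (-(j : ℤ))‖ ≤ d * (s + ε) ^ j)
    (hleft : ∀ j : ℤ, (R (j - 1)).comp A₁ + (R j).comp A₀ =
      if j = 0 then (1 : H →L[ℂ] H) else 0)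
    (hright : ∀ j : ℤ, A₁.comp (R (j - 1)) + A₀.comp (R j) =
      if j = 0 then (1 : K →L[ℂ] K) else 0) :
    IsIdempotentElem ((R (-1)).comp A₁) ∧
    1 - (R (-1)).comp A₁ = (R 0).comp A₀ ∧
    IsIdempotentElem (A₁.comp (R (-1))) ∧
    1 - A₁.comp (R (-1)) = A₀.comp (R 0) :=
  complementary_projections_general s r hs hsr A₀ A₁ R hgb hleft hright
end

section
/- Suppose {R_j}_{j∈ℤ} ⊆ L(K,H) satisfy the fundamental equations and geometric bounds on U_{s,r}, and let P = R_{-1}A_1, Q = A_1 R_{-1}. Then A_i = Q A_i P + (I-Q) A_i (I-P) for i = 0, 1. -/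
/-!
The only analytic input is `R₋₂ A₁ R₀ = 0`. The fundamental equations let one move a unit of
index from one factor of `R_{i-1} A₁ R_j` to the other, so `R₋₂ A₁ R₀ = R_{-n-2} A₁ R_n` for every
`n`, and the geometric bounds make the right-hand side decay like `((s + ε)/(r - δ))ⁿ`.
Granting that, `P` is idempotent and `Q A₀ = A₀ P` (while `Q A₁ = A₁ P` is trivial), and any
`A` with `Q A = A P` splits as `Q A P + (I - Q) A (I - P)`.
-/

open ContinuousLinearMap Filter

theorem ContinuousLinearMap.eq_comp_add_sub_comp_of_comp_eq_comp
    {S M N : Type*} [Ring S] [TopologicalSpace M] [AddCommGroup M] [Module S M]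
    [IsTopologicalAddGroup M] [TopologicalSpace N] [AddCommGroup N] [Module S N]
    [IsTopologicalAddGroup N] {A : M →L[S] N} {P : M →L[S] M} {Q : N →L[S] N}
    (hP : IsIdempotentElem P) (hQA : Q.comp A = A.comp P) :
    A = Q.comp (A.comp P) + (1 - Q).comp (A.comp (1 - P)) := by
  simp only [sub_comp, comp_sub, one_def, id_comp, comp_id, ← comp_assoc, hQA]
  rw [comp_assoc, ← mul_def, hP.eq]
  abel

theorem eq_zero_of_norm_le_mul_pow {E : Type*} [NormedAddCommGroup E] {x : E} {C q : ℝ}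
    (hq₀ : 0 ≤ q) (hq₁ : q < 1) (h : ∀ n : ℕ, ‖x‖ ≤ C * q ^ n) : x = 0 := by
  have hlim : Tendsto (fun n : ℕ => C * q ^ n) atTop (nhds 0) := by
    simpa using (tendsto_pow_atTop_nhds_zero_of_lt_one hq₀ hq₁).const_mul C
  exact norm_le_zero_iff.mp (ge_of_tendsto' hlim h)

section Pencil

variable {𝕜 H K : Type*} [NontriviallyNormedField 𝕜] [NormedAddCommGroup H] [NormedSpace 𝕜 H]
  [NormedAddCommGroup K] [NormedSpace 𝕜 K]

def LeftFundamentalEquations (A₀ A₁ : H →L[𝕜] K) (R : ℤ → K →L[𝕜] H) : Prop :=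
  ∀ j : ℤ, (R (j - 1)).comp A₁ + (R j).comp A₀ = if j = 0 then (1 : H →L[𝕜] H) else 0

def RightFundamentalEquations (A₀ A₁ : H →L[𝕜] K) (R : ℤ → K →L[𝕜] H) : Prop :=
  ∀ j : ℤ, A₁.comp (R (j - 1)) + A₀.comp (R j) = if j = 0 then (1 : K →L[𝕜] K) else 0

variable {A₀ A₁ : H →L[𝕜] K} {R : ℤ → K →L[𝕜] H}

namespace LeftFundamentalEquations

theorem comp_eq_neg (h : LeftFundamentalEquations A₀ A₁ R) {j : ℤ} (hj : j ≠ 0) :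
    (R (j - 1)).comp A₁ = -(R j).comp A₀ := by
  have := h j
  rw [if_neg hj] at this
  exact eq_neg_of_add_eq_zero_left this

theorem comp_add_comp_eq_one (h : LeftFundamentalEquations A₀ A₁ R) :
    (R (-1)).comp A₁ + (R 0).comp A₀ = 1 := by
  simpa using h 0

end LeftFundamentalEquations

namespace RightFundamentalEquations

theorem comp_eq_neg (h : RightFundamentalEquations A₀ A₁ R) {j : ℤ} (hj : j ≠ 0) :
    A₁.comp (R (j - 1)) = -A₀.comp (R j) := by
  have := h j
  rw [if_neg hj] at this
  exact eq_neg_of_add_eq_zero_left this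

theorem comp_add_comp_eq_one (h : RightFundamentalEquations A₀ A₁ R) :
    A₁.comp (R (-1)) + A₀.comp (R 0) = 1 := by
  simpa using h 0

end RightFundamentalEquations

theorem comp_comp_sub_one_eq (hl : LeftFundamentalEquations A₀ A₁ R)
    (hr : RightFundamentalEquations A₀ A₁ R) {i j : ℤ} (hi : i ≠ 0) (hj : j ≠ 0) :
    (R (i - 1)).comp (A₁.comp (R j)) = (R i).comp (A₁.comp (R (j - 1))) := by
  rw [← comp_assoc, hl.comp_eq_neg hi, hr.comp_eq_neg hj, neg_comp, comp_neg, comp_assoc]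

theorem comp_comp_neg_sub_two_eq (hl : LeftFundamentalEquations A₀ A₁ R)
    (hr : RightFundamentalEquations A₀ A₁ R) (n : ℕ) :
    (R (-n - 2)).comp (A₁.comp (R n)) = (R (-2)).comp (A₁.comp (R 0)) := by
  induction n with
  | zero => simp
  | succ n ih =>
    have hi : -((n + 1 : ℕ) : ℤ) - 2 = (-n - 2) - 1 := by push_cast; ring
    rw [hi, Nat.cast_succ, comp_comp_sub_one_eq hl hr (by omega) (by omega), add_sub_cancel_right,
      ih]

theorem comp_comp_eq_zero_of_norm_le (hl : LeftFundamentalEquations A₀ A₁ R)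
    (hr : RightFundamentalEquations A₀ A₁ R) {a b c d : ℝ} (ha : 0 ≤ a) (hab : a < b)
    (hR : ∀ n : ℕ, ‖R n‖ ≤ c / b ^ n ∧ ‖R (-n)‖ ≤ d * a ^ n) :
    (R (-2)).comp (A₁.comp (R 0)) = 0 := by
  have hb : 0 < b := ha.trans_lt hab
  refine eq_zero_of_norm_le_mul_pow (C := d * a ^ 2 * ‖A₁‖ * c)
    (div_nonneg ha hb.le) ((div_lt_one hb).mpr hab) fun n => ?_
  have hRneg : ‖R (-n - 2)‖ ≤ d * a ^ (n + 2) := by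
    have hi : -(n : ℤ) - 2 = -((n + 2 : ℕ) : ℤ) := by push_cast; ring
    exact hi ▸ (hR (n + 2)).2
  rw [← comp_comp_neg_sub_two_eq hl hr n]
  calc ‖(R (-n - 2)).comp (A₁.comp (R n))‖ ≤ ‖R (-n - 2)‖ * (‖A₁‖ * ‖R n‖) :=
        (opNorm_comp_le _ _).trans (by gcongr; exact opNorm_comp_le _ _)
    _ ≤ d * a ^ (n + 2) * (‖A₁‖ * (c / b ^ n)) := by
        gcongr
        exacts [(norm_nonneg _).trans hRneg, (hR n).1]
    _ = d * a ^ 2 * ‖A₁‖ * c * (a / b) ^ n := by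
        rw [div_pow]
        field_simp
        ring

theorem isIdempotentElem_comp_of_comp_comp_eq_zero (hl : LeftFundamentalEquations A₀ A₁ R)
    (hr : RightFundamentalEquations A₀ A₁ R) (h0 : (R (-2)).comp (A₁.comp (R 0)) = 0) :
    IsIdempotentElem ((R (-1)).comp A₁) := by
  have hRA₀ : (R (-1)).comp A₀ = -(R (-2)).comp A₁ :=
    neg_eq_iff_eq_neg.mp (by simpa using (hl.comp_eq_neg (j := -1) (by norm_num)).symm)
  rw [IsIdempotentElem, mul_def]
  calc ((R (-1)).comp A₁).comp ((R (-1)).comp A₁)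
      = (R (-1)).comp ((A₁.comp (R (-1))).comp A₁) := by simp only [comp_assoc]
    _ = (R (-1)).comp A₁ - ((R (-1)).comp A₀).comp ((R 0).comp A₁) := by
        rw [eq_sub_of_add_eq hr.comp_add_comp_eq_one]
        simp only [sub_comp, comp_sub, one_def, id_comp, comp_assoc]
    _ = (R (-1)).comp A₁ + ((R (-2)).comp (A₁.comp (R 0))).comp A₁ := by
        rw [hRA₀, neg_comp, sub_neg_eq_add]
        simp only [comp_assoc]
    _ = (R (-1)).comp A₁ := by rw [h0, zero_comp, add_zero]

theorem comp_comp_eq_comp_comp (hl : LeftFundamentalEquations A₀ A₁ R)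
    (hr : RightFundamentalEquations A₀ A₁ R) :
    (A₁.comp (R (-1))).comp A₀ = A₀.comp ((R (-1)).comp A₁) := by
  rw [eq_sub_of_add_eq hr.comp_add_comp_eq_one, eq_sub_of_add_eq hl.comp_add_comp_eq_one]
  simp only [sub_comp, comp_sub, one_def, id_comp, comp_id, comp_assoc]

end Pencil

theorem pencil_block_diagonal_general
    {H K : Type*} [NormedAddCommGroup H] [NormedSpace ℂ H]
    [NormedAddCommGroup K] [NormedSpace ℂ K]
    (s r : ℝ) (hs : 0 ≤ s) (hsr : s < r)
    (A₀ A₁ : H →L[ℂ] K) (R : ℤ → (K →L[ℂ] H))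
    (hgb : ∀ δ ε : ℝ, 0 < δ → 0 < ε → s + ε < r - δ →
      ∃ c d : ℝ, 0 < c ∧ 0 < d ∧
        ∀ j : ℕ, ‖R (j : ℤ)‖ ≤ c / (r - δ) ^ j ∧ ‖R (-(j : ℤ))‖ ≤ d * (s + ε) ^ j)
    (hleft : ∀ j : ℤ, (R (j - 1)).comp A₁ + (R j).comp A₀ =
      if j = 0 then (1 : H →L[ℂ] H) else 0)
    (hright : ∀ j : ℤ, A₁.comp (R (j - 1)) + A₀.comp (R j) =
      if j = 0 then (1 : K →L[ℂ] K) else 0) :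
    ∀ Ai ∈ ({A₀, A₁} : Set (H →L[ℂ] K)),
      Ai = ((A₁.comp (R (-1))).comp (Ai.comp ((R (-1)).comp A₁))) +
        ((1 - A₁.comp (R (-1))).comp (Ai.comp (1 - (R (-1)).comp A₁))) := by
  obtain ⟨c, d, -, -, hR⟩ := hgb ((r - s) / 3) ((r - s) / 3) (by linarith) (by linarith)
    (by linarith)
  have hP : IsIdempotentElem ((R (-1)).comp A₁) :=
    isIdempotentElem_comp_of_comp_comp_eq_zero hleft hright
      (comp_comp_eq_zero_of_norm_le hleft hright (by linarith) (by linarith) hR)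
  rintro Ai (rfl | rfl)
  · exact eq_comp_add_sub_comp_of_comp_eq_comp hP (comp_comp_eq_comp_comp hleft hright)
  · exact eq_comp_add_sub_comp_of_comp_eq_comp hP (comp_assoc _ _ _)

/-- with `P = R₋₁A₁` and `Q = A₁R₋₁`, each coefficient satisfies
`Aᵢ = Q Aᵢ P + (I-Q) Aᵢ (I-P)` for `i = 0, 1`. -/
theorem pencil_block_diagonal
    {H K : Type*} [NormedAddCommGroup H] [NormedSpace ℂ H] [CompleteSpace H]
    [NormedAddCommGroup K] [NormedSpace ℂ K] [CompleteSpace K]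
    (s r : ℝ) (hs : 0 ≤ s) (hsr : s < r)
    (A₀ A₁ : H →L[ℂ] K) (R : ℤ → (K →L[ℂ] H))
    (hgb : ∀ δ ε : ℝ, 0 < δ → 0 < ε → s + ε < r - δ →
      ∃ c d : ℝ, 0 < c ∧ 0 < d ∧
        ∀ j : ℕ, ‖R (j : ℤ)‖ ≤ c / (r - δ) ^ j ∧ ‖R (-(j : ℤ))‖ ≤ d * (s + ε) ^ j)
    (hleft : ∀ j : ℤ, (R (j - 1)).comp A₁ + (R j).comp A₀ =
      if j = 0 then (1 : H →L[ℂ] H) else 0)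
    (hright : ∀ j : ℤ, A₁.comp (R (j - 1)) + A₀.comp (R j) =
      if j = 0 then (1 : K →L[ℂ] K) else 0) :
    ∀ Ai ∈ ({A₀, A₁} : Set (H →L[ℂ] K)),
      Ai = ((A₁.comp (R (-1))).comp (Ai.comp ((R (-1)).comp A₁))) +
        ((1 - A₁.comp (R (-1))).comp (Ai.comp (1 - (R (-1)).comp A₁))) :=
  pencil_block_diagonal_general s r hs hsr A₀ A₁ R hgb hleft hright
end

section
/- Suppose {R_j}_{j∈ℤ} ⊆ L(K,H) satisfy the fundamental equations and geometric bounds on U_{s,r}, and let P = R_{-1}A_1, Q = A_1 R_{-1}. Then R_j = P R_j Q for all j ≤ -1, and R_j = (I-P) R_j (I-Q) for all j ≥ 0. -/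
/-- with `P = R₋₁A₁` and `Q = A₁R₋₁`, one has `R_j = P R_j Q` for `j ≤ -1`
and `R_j = (I-P) R_j (I-Q)` for `j ≥ 0`. -/
theorem coefficients_projected
    {H K : Type*} [NormedAddCommGroup H] [NormedSpace ℂ H] [CompleteSpace H]
    [NormedAddCommGroup K] [NormedSpace ℂ K] [CompleteSpace K]
    (s r : ℝ) (hs : 0 ≤ s) (hsr : s < r)
    (A₀ A₁ : H →L[ℂ] K) (R : ℤ → (K →L[ℂ] H))
    (hgb : ∀ δ ε : ℝ, 0 < δ → 0 < ε → s + ε < r - δ →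
      ∃ c d : ℝ, 0 < c ∧ 0 < d ∧
        ∀ j : ℕ, ‖R (j : ℤ)‖ ≤ c / (r - δ) ^ j ∧ ‖R (-(j : ℤ))‖ ≤ d * (s + ε) ^ j)
    (hleft : ∀ j : ℤ, (R (j - 1)).comp A₁ + (R j).comp A₀ =
      if j = 0 then (1 : H →L[ℂ] H) else 0)
    (hright : ∀ j : ℤ, A₁.comp (R (j - 1)) + A₀.comp (R j) =
      if j = 0 then (1 : K →L[ℂ] K) else 0) :
    (∀ j : ℤ, j ≤ -1 →
      R j = (((R (-1)).comp A₁).comp (R j)).comp (A₁.comp (R (-1)))) ∧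
    (∀ j : ℤ, 0 ≤ j →
      R j = ((1 - (R (-1)).comp A₁).comp (R j)).comp (1 - A₁.comp (R (-1)))) := by
  obtain ⟨c, d, hc, hd, hb⟩ := hgb ((r - s) / 3) ((r - s) / 3)
    (by linarith) (by linarith) (by linarith)
  set ρr : ℝ := r - (r - s) / 3 with hρr_def
  set ρs : ℝ := s + (r - s) / 3 with hρs_def
  have hρs : 0 < ρs := by simp only [hρs_def]; linarith
  have hρsr : ρs < ρr := by simp only [hρs_def, hρr_def]; linarith
  have hρr : 0 < ρr := lt_trans hρs hρsr
  -- the key recurrence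
  have key : ∀ m n : ℤ, (R m).comp (A₁.comp (R n)) =
      (R (m + 1)).comp (A₁.comp (R (n - 1)))
      + (if m = -1 then R n else 0) - (if n = 0 then R (m + 1) else 0) := by
    intro m n
    have h1 := hleft (m + 1)
    rw [add_sub_cancel_right] at h1
    have h1' : (R m).comp A₁ = (if m + 1 = 0 then (1 : H →L[ℂ] H) else 0)
        - (R (m + 1)).comp A₀ := eq_sub_of_add_eq h1
    have h2' : A₀.comp (R n) = (if n = 0 then (1 : K →L[ℂ] K) else 0)
        - A₁.comp (R (n - 1)) := eq_sub_of_add_eq' (hright n)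
    have e1 : (R m).comp (A₁.comp (R n)) = ((R m).comp A₁).comp (R n) :=
      (ContinuousLinearMap.comp_assoc _ _ _).symm
    rw [e1, h1', ContinuousLinearMap.sub_comp, ContinuousLinearMap.comp_assoc, h2',
      ContinuousLinearMap.comp_sub]
    have e2 : ((if m + 1 = 0 then (1 : H →L[ℂ] H) else 0)).comp (R n)
        = (if m = -1 then R n else 0) := by
      by_cases hm : m = -1
      · simp [hm, ContinuousLinearMap.one_def]
      · have : ¬ (m + 1 = 0) := by omega
        simp [hm, this]
    have e3 : (R (m + 1)).comp (if n = 0 then (1 : K →L[ℂ] K) else 0)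
        = (if n = 0 then R (m + 1) else 0) := by
      by_cases hn : n = 0 <;> simp [hn, ContinuousLinearMap.one_def]
    rw [e2, e3]
    abel
  -- norm bound on mixed terms
  have normS : ∀ a b : ℤ, 0 ≤ a → b ≤ -1 →
      ‖(R a).comp (A₁.comp (R b))‖ ≤
        (c * ρr⁻¹ ^ a.toNat) * ‖A₁‖ * (d * ρs ^ (-b).toNat) := by
    intro a b ha hb'
    have hRa : ‖R a‖ ≤ c * ρr⁻¹ ^ a.toNat := by
      have := (hb a.toNat).1
      rw [Int.toNat_of_nonneg ha] at this
      calc ‖R a‖ ≤ c / ρr ^ a.toNat := this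
        _ = c * ρr⁻¹ ^ a.toNat := by rw [div_eq_mul_inv, inv_pow]
    have hRb : ‖R b‖ ≤ d * ρs ^ (-b).toNat := by
      have := (hb (-b).toNat).2
      have hbe : -((((-b).toNat : ℕ)) : ℤ) = b := by omega
      rw [hbe] at this
      exact this
    calc ‖(R a).comp (A₁.comp (R b))‖
        ≤ ‖R a‖ * ‖A₁.comp (R b)‖ := ContinuousLinearMap.opNorm_comp_le _ _
      _ ≤ ‖R a‖ * (‖A₁‖ * ‖R b‖) :=
          mul_le_mul_of_nonneg_left (ContinuousLinearMap.opNorm_comp_le _ _) (norm_nonneg _)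
      _ ≤ (c * ρr⁻¹ ^ a.toNat) * (‖A₁‖ * (d * ρs ^ (-b).toNat)) :=
          mul_le_mul hRa (mul_le_mul_of_nonneg_left hRb (norm_nonneg _))
            (by positivity) (by positivity)
      _ = (c * ρr⁻¹ ^ a.toNat) * ‖A₁‖ * (d * ρs ^ (-b).toNat) := by ring
  -- vanishing lemma A : m ≥ 0, n ≤ -1
  have zeroA : ∀ m n : ℤ, 0 ≤ m → n ≤ -1 → (R m).comp (A₁.comp (R n)) = 0 := by
    intro m n hm hn
    have const : ∀ k : ℕ, (R m).comp (A₁.comp (R n))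
        = (R (m + k)).comp (A₁.comp (R (n - k))) := by
      intro k
      induction k with
      | zero => simp
      | succ k ih =>
        rw [ih, key (m + k) (n - k), if_neg (by omega), if_neg (by omega)]
        have e1 : m + (k : ℤ) + 1 = m + ((k : ℕ) + 1 : ℕ) := by push_cast; ring
        have e2 : n - (k : ℤ) - 1 = n - ((k : ℕ) + 1 : ℕ) := by push_cast; ring
        rw [e1, e2]
        abel
    have hbound : ∀ k : ℕ, ‖(R m).comp (A₁.comp (R n))‖ ≤
        ((c * ρr⁻¹ ^ m.toNat) * ‖A₁‖ * (d * ρs ^ (-n).toNat)) * (ρs * ρr⁻¹) ^ k := by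
      intro k
      rw [const k]
      have h1 := normS (m + k) (n - k) (by omega) (by omega)
      have e1 : (m + (k : ℤ)).toNat = m.toNat + k := by omega
      have e2 : (-(n - (k : ℤ))).toNat = (-n).toNat + k := by omega
      rw [e1, e2] at h1
      calc ‖(R (m + k)).comp (A₁.comp (R (n - k)))‖
          ≤ (c * ρr⁻¹ ^ (m.toNat + k)) * ‖A₁‖ * (d * ρs ^ ((-n).toNat + k)) := h1
        _ = ((c * ρr⁻¹ ^ m.toNat) * ‖A₁‖ * (d * ρs ^ (-n).toNat)) * (ρs * ρr⁻¹) ^ k := by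
            rw [pow_add, pow_add, mul_pow]; ring
    have hρ01 : ρs * ρr⁻¹ < 1 := by
      rw [mul_inv_lt_iff₀ hρr, one_mul]; exact hρsr
    have hρ0 : 0 ≤ ρs * ρr⁻¹ := by positivity
    have htend : Filter.Tendsto
        (fun k : ℕ => ((c * ρr⁻¹ ^ m.toNat) * ‖A₁‖ * (d * ρs ^ (-n).toNat)) * (ρs * ρr⁻¹) ^ k)
        Filter.atTop (nhds 0) := by
      rw [show (0:ℝ) = ((c * ρr⁻¹ ^ m.toNat) * ‖A₁‖ * (d * ρs ^ (-n).toNat)) * 0 by ring]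
      exact Filter.Tendsto.const_mul _ (tendsto_pow_atTop_nhds_zero_of_lt_one hρ0 hρ01)
    have hle : ‖(R m).comp (A₁.comp (R n))‖ ≤ 0 :=
      ge_of_tendsto htend (Filter.Eventually.of_forall hbound)
    exact norm_le_zero_iff.mp hle
  -- vanishing lemma B : m ≤ -1, n ≥ 0
  have zeroB : ∀ m n : ℤ, m ≤ -1 → 0 ≤ n → (R m).comp (A₁.comp (R n)) = 0 := by
    intro m n hm hn
    have const : ∀ k : ℕ, (R m).comp (A₁.comp (R n))
        = (R (m - k)).comp (A₁.comp (R (n + k))) := by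
      intro k
      induction k with
      | zero => simp
      | succ k ih =>
        have hk := key (m - k - 1) (n + k + 1)
        rw [if_neg (by omega), if_neg (by omega)] at hk
        have e1 : m - (k : ℤ) - 1 + 1 = m - k := by ring
        have e2 : n + (k : ℤ) + 1 - 1 = n + k := by ring
        rw [e1, e2] at hk
        have e3 : m - ((k : ℕ) + 1 : ℕ) = m - (k:ℤ) - 1 := by push_cast; ring
        have e4 : n + ((k : ℕ) + 1 : ℕ) = n + (k:ℤ) + 1 := by push_cast; ring
        rw [e3, e4, hk, ← ih]
        abel
    have hbound : ∀ k : ℕ, ‖(R m).comp (A₁.comp (R n))‖ ≤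
        ((d * ρs ^ (-m).toNat) * ‖A₁‖ * (c * ρr⁻¹ ^ n.toNat)) * (ρs * ρr⁻¹) ^ k := by
      intro k
      rw [const k]
      -- here R (m-k) is the negative index, R (n+k) the positive one
      have hRa : ‖R (m - k)‖ ≤ d * ρs ^ ((-m).toNat + k) := by
        have := (hb ((-m).toNat + k)).2
        have hbe : -((((-m).toNat + k : ℕ)) : ℤ) = m - k := by omega
        rw [hbe] at this; exact this
      have hRb : ‖R (n + k)‖ ≤ c * ρr⁻¹ ^ (n.toNat + k) := by
        have := (hb (n.toNat + k)).1
        have hbe : (((n.toNat + k : ℕ)) : ℤ) = n + k := by omega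
        rw [hbe] at this
        calc ‖R (n + k)‖ ≤ c / ρr ^ (n.toNat + k) := this
          _ = c * ρr⁻¹ ^ (n.toNat + k) := by rw [div_eq_mul_inv, inv_pow]
      calc ‖(R (m - k)).comp (A₁.comp (R (n + k)))‖
          ≤ ‖R (m - k)‖ * ‖A₁.comp (R (n + k))‖ := ContinuousLinearMap.opNorm_comp_le _ _
        _ ≤ ‖R (m - k)‖ * (‖A₁‖ * ‖R (n + k)‖) :=
            mul_le_mul_of_nonneg_left (ContinuousLinearMap.opNorm_comp_le _ _) (norm_nonneg _)
        _ ≤ (d * ρs ^ ((-m).toNat + k)) * (‖A₁‖ * (c * ρr⁻¹ ^ (n.toNat + k))) :=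
            mul_le_mul hRa (mul_le_mul_of_nonneg_left hRb (norm_nonneg _))
              (by positivity) (by positivity)
        _ = ((d * ρs ^ (-m).toNat) * ‖A₁‖ * (c * ρr⁻¹ ^ n.toNat)) * (ρs * ρr⁻¹) ^ k := by
            rw [pow_add, pow_add, mul_pow]; ring
    have hρ01 : ρs * ρr⁻¹ < 1 := by
      rw [mul_inv_lt_iff₀ hρr, one_mul]; exact hρsr
    have hρ0 : 0 ≤ ρs * ρr⁻¹ := by positivity
    have htend : Filter.Tendsto
        (fun k : ℕ => ((d * ρs ^ (-m).toNat) * ‖A₁‖ * (c * ρr⁻¹ ^ n.toNat)) * (ρs * ρr⁻¹) ^ k)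
        Filter.atTop (nhds 0) := by
      rw [show (0:ℝ) = ((d * ρs ^ (-m).toNat) * ‖A₁‖ * (c * ρr⁻¹ ^ n.toNat)) * 0 by ring]
      exact Filter.Tendsto.const_mul _ (tendsto_pow_atTop_nhds_zero_of_lt_one hρ0 hρ01)
    have hle : ‖(R m).comp (A₁.comp (R n))‖ ≤ 0 :=
      ge_of_tendsto htend (Filter.Eventually.of_forall hbound)
    exact norm_le_zero_iff.mp hle
  -- the four identities
  have Pneg : ∀ j : ℤ, j ≤ -1 → (R (-1)).comp (A₁.comp (R j)) = R j := by
    intro j hj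
    have hk := key (-1) j
    rw [if_pos rfl, if_neg (by omega)] at hk
    have h0 : (R ((-1 : ℤ) + 1)).comp (A₁.comp (R (j - 1))) = 0 := by
      have : ((-1 : ℤ) + 1) = 0 := by ring
      rw [this]
      exact zeroA 0 (j - 1) le_rfl (by omega)
    rw [h0] at hk
    rw [hk]; abel
  have Qneg : ∀ j : ℤ, j ≤ -1 → (R j).comp (A₁.comp (R (-1))) = R j := by
    intro j hj
    have hk := key (j - 1) 0
    rw [if_neg (by omega), if_pos rfl] at hk
    have h0 : (R (j - 1)).comp (A₁.comp (R 0)) = 0 := zeroB (j - 1) 0 (by omega) le_rfl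
    rw [h0] at hk
    have e1 : (j : ℤ) - 1 + 1 = j := by ring
    have e2 : (0 : ℤ) - 1 = -1 := by ring
    rw [e1, e2] at hk
    rw [add_zero] at hk
    exact sub_eq_zero.mp hk.symm
  have Ppos : ∀ j : ℤ, 0 ≤ j → (R (-1)).comp (A₁.comp (R j)) = 0 := fun j hj =>
    zeroB (-1) j le_rfl hj
  have Qpos : ∀ j : ℤ, 0 ≤ j → (R j).comp (A₁.comp (R (-1))) = 0 := fun j hj =>
    zeroA j (-1) hj le_rfl
  constructor
  · intro j hj
    have e : (((R (-1)).comp A₁).comp (R j)) = R j := by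
      rw [ContinuousLinearMap.comp_assoc]; exact Pneg j hj
    rw [e, Qneg j hj]
  · intro j hj
    have e1 : (1 - (R (-1)).comp A₁).comp (R j) = R j := by
      rw [ContinuousLinearMap.sub_comp, ContinuousLinearMap.one_def,
        ContinuousLinearMap.id_comp, ContinuousLinearMap.comp_assoc, Ppos j hj, sub_zero]
    have e2 : (R j).comp (1 - A₁.comp (R (-1))) = R j := by
      rw [ContinuousLinearMap.comp_sub, Qpos j hj, sub_zero,
        ContinuousLinearMap.one_def, ContinuousLinearMap.comp_id]
    rw [e1, e2]
end

section
/- Suppose {R_j}_{j∈ℤ} ⊆ L(K,H) satisfy the fundamental equations and geometric bounds on U_{s,r}. Then R_{-j} = (-1)^{j-1}(R_{-1}A_0)^{j-1} R_{-1} and R_j = (-1)^j (R_0 A_1)^j R_0 for all j ∈ ℕ. -/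
lemma aux_op_zero {E F : Type*} [NormedAddCommGroup E] [NormedSpace ℂ E]
    [NormedAddCommGroup F] [NormedSpace ℂ F]
    (T : E →L[ℂ] F) (C a : ℝ) (ha0 : 0 ≤ a) (ha1 : a < 1)
    (h : ∀ n : ℕ, ‖T‖ ≤ C * a ^ n) : T = 0 := by
  have hlim : Filter.Tendsto (fun n : ℕ => C * a ^ n) Filter.atTop (nhds 0) := by
    have := tendsto_pow_atTop_nhds_zero_of_lt_one ha0 ha1
    simpa using this.const_mul C
  have h0 : ‖T‖ ≤ 0 := ge_of_tendsto' hlim h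
  simpa [norm_le_zero_iff] using h0



/-- `R_{-j} = (-1)^{j-1} (R₋₁A₀)^{j-1} R₋₁` and `R_j = (-1)^j (R₀A₁)^j R₀`
for all `j ∈ ℕ` (`j ≥ 1`; the second identity also trivially holds at `j = 0`). -/
theorem coefficients_closed_form
    {H K : Type*} [NormedAddCommGroup H] [NormedSpace ℂ H] [CompleteSpace H]
    [NormedAddCommGroup K] [NormedSpace ℂ K] [CompleteSpace K]
    (s r : ℝ) (hs : 0 ≤ s) (hsr : s < r)
    (A₀ A₁ : H →L[ℂ] K) (R : ℤ → (K →L[ℂ] H))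
    (hgb : ∀ δ ε : ℝ, 0 < δ → 0 < ε → s + ε < r - δ →
      ∃ c d : ℝ, 0 < c ∧ 0 < d ∧
        ∀ j : ℕ, ‖R (j : ℤ)‖ ≤ c / (r - δ) ^ j ∧ ‖R (-(j : ℤ))‖ ≤ d * (s + ε) ^ j)
    (hleft : ∀ j : ℤ, (R (j - 1)).comp A₁ + (R j).comp A₀ =
      if j = 0 then (1 : H →L[ℂ] H) else 0)
    (hright : ∀ j : ℤ, A₁.comp (R (j - 1)) + A₀.comp (R j) =
      if j = 0 then (1 : K →L[ℂ] K) else 0) :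
    ∀ j : ℕ, 1 ≤ j →
      R (-(j : ℤ)) = ((-1 : ℂ) ^ (j - 1)) •
          ((((R (-1)).comp A₀) ^ (j - 1)).comp (R (-1))) ∧
      R (j : ℤ) = ((-1 : ℂ) ^ j) • ((((R 0).comp A₁) ^ j).comp (R 0)) := by
  -- constants from the geometric bound
  set ε : ℝ := (r - s) / 4 with hεdef
  have hε : 0 < ε := by simp only [hεdef]; linarith
  have hsr2 : s + ε < r - ε := by simp only [hεdef]; linarith
  obtain ⟨c, d, hc, hd, hbd⟩ := hgb ε ε hε hε hsr2
  have hrε : 0 < r - ε := by linarith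
  have hsε : 0 ≤ s + ε := by linarith
  set a : ℝ := (s + ε) / (r - ε) with hadef
  have ha0 : 0 ≤ a := div_nonneg hsε hrε.le
  have ha1 : a < 1 := (div_lt_one hrε).mpr (by linarith)
  -- pointwise fundamental relations (off-diagonal)
  have L : ∀ m : ℤ, m ≠ 0 → ∀ v, R (m - 1) (A₁ v) + R m (A₀ v) = 0 := by
    intro m hm v
    have h := hleft m
    rw [if_neg hm] at h
    simpa using ContinuousLinearMap.ext_iff.mp h v
  have Rr : ∀ m : ℤ, m ≠ 0 → ∀ v, A₁ (R (m - 1) v) + A₀ (R m v) = 0 := by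
    intro m hm v
    have h := hright m
    rw [if_neg hm] at h
    simpa using ContinuousLinearMap.ext_iff.mp h v
  -- identity operator decomposition (right equation at 0)
  have hI : ∀ v : K, A₁ (R (-1) v) + A₀ (R 0 v) = v := by
    intro v
    have h := hright 0
    rw [if_pos rfl] at h
    have := ContinuousLinearMap.ext_iff.mp h v
    simpa using this
  -- T_{j,k} = R_j A₁ R_{-(k+1)} vanishes
  have Tzero : ∀ (j k : ℕ) (x : K), R (j : ℤ) (A₁ (R (-(k : ℤ) - 1) x)) = 0 := by
    intro j k
    have shift : ∀ n : ℕ, (R (j : ℤ)).comp (A₁.comp (R (-(k : ℤ) - 1))) =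
        (R ((j : ℤ) + n)).comp (A₁.comp (R (-(k : ℤ) - 1 - n))) := by
      intro n
      induction n with
      | zero => simp
      | succ n ih =>
        rw [ih]
        ext x
        simp only [ContinuousLinearMap.comp_apply]
        push_cast
        have e1 := L ((j : ℤ) + n + 1) (by omega) (R (-(k : ℤ) - 1 - n) x)
        have hi1 : ((j : ℤ) + n + 1 - 1) = (j : ℤ) + n := by ring
        rw [hi1] at e1
        have e2 := Rr (-(k : ℤ) - 1 - n) (by omega) x
        have hi2 : (-(k : ℤ) - 1 - n - 1) = -(k : ℤ) - 1 - ((n : ℤ) + 1) := by ring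
        rw [hi2] at e2
        have e1' : R ((j:ℤ)+n) (A₁ (R (-(k:ℤ)-1-n) x)) =
            -(R ((j:ℤ)+n+1) (A₀ (R (-(k:ℤ)-1-n) x))) := eq_neg_of_add_eq_zero_left e1
        have e2' : A₀ (R (-(k:ℤ)-1-n) x) = -(A₁ (R (-(k:ℤ)-1-((n:ℤ)+1)) x)) :=
          eq_neg_of_add_eq_zero_right e2
        rw [e1', e2', map_neg, neg_neg]
        have hi3 : ((j : ℤ) + ((n : ℤ) + 1)) = (j : ℤ) + n + 1 := by ring
        rw [hi3]
    have hTz : (R (j : ℤ)).comp (A₁.comp (R (-(k : ℤ) - 1))) = 0 := by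
      apply aux_op_zero _ (c * ‖A₁‖ * (d * (s + ε) ^ (k + 1)) / (r - ε) ^ j) a ha0 ha1
      intro n
      rw [shift n]
      have hcast1 : ((j : ℤ) + n) = ((j + n : ℕ) : ℤ) := by push_cast; ring
      have hcast2 : (-(k : ℤ) - 1 - n) = -((k + 1 + n : ℕ) : ℤ) := by push_cast; ring
      rw [hcast1, hcast2]
      have b1 := (hbd (j + n)).1
      have b2 := (hbd (k + 1 + n)).2
      calc ‖(R ((j + n : ℕ) : ℤ)).comp (A₁.comp (R (-((k + 1 + n : ℕ) : ℤ))))‖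
          ≤ ‖R ((j + n : ℕ) : ℤ)‖ * (‖A₁‖ * ‖R (-((k + 1 + n : ℕ) : ℤ))‖) := by
            refine (ContinuousLinearMap.opNorm_comp_le _ _).trans ?_
            gcongr
            exact ContinuousLinearMap.opNorm_comp_le _ _
        _ ≤ (c / (r - ε) ^ (j + n)) * (‖A₁‖ * (d * (s + ε) ^ (k + 1 + n))) := by
            gcongr
        _ = c * ‖A₁‖ * (d * (s + ε) ^ (k + 1)) / (r - ε) ^ j * a ^ n := by
            rw [hadef, div_pow, pow_add, pow_add, pow_add]
            field_simp
    intro x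
    have := ContinuousLinearMap.ext_iff.mp hTz x
    simpa using this
  -- S_{k,j} = R_{-(k+1)} A₀ R_j vanishes
  have Szero : ∀ (k j : ℕ) (x : K), R (-(k : ℤ) - 1) (A₀ (R (j : ℤ) x)) = 0 := by
    intro k j
    have shift : ∀ n : ℕ, (R (-(k : ℤ) - 1)).comp (A₀.comp (R (j : ℤ))) =
        (R (-(k : ℤ) - 1 - n)).comp (A₀.comp (R ((j : ℤ) + n))) := by
      intro n
      induction n with
      | zero => simp
      | succ n ih =>
        rw [ih]
        ext x
        simp only [ContinuousLinearMap.comp_apply]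
        push_cast
        have e1 := L (-(k : ℤ) - 1 - n) (by omega) (R ((j : ℤ) + n) x)
        have hi1 : (-(k : ℤ) - 1 - n - 1) = -(k : ℤ) - 1 - ((n : ℤ) + 1) := by ring
        rw [hi1] at e1
        have e2 := Rr ((j : ℤ) + n + 1) (by omega) x
        have hi2 : ((j : ℤ) + n + 1 - 1) = (j : ℤ) + n := by ring
        rw [hi2] at e2
        have e1' : R (-(k:ℤ)-1-n) (A₀ (R ((j:ℤ)+n) x)) =
            -(R (-(k:ℤ)-1-((n:ℤ)+1)) (A₁ (R ((j:ℤ)+n) x))) := eq_neg_of_add_eq_zero_right e1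
        have e2' : A₁ (R ((j:ℤ)+n) x) = -(A₀ (R ((j:ℤ)+n+1) x)) :=
          eq_neg_of_add_eq_zero_left e2
        rw [e1', e2', map_neg, neg_neg]
        have hi3 : ((j : ℤ) + ((n : ℤ) + 1)) = (j : ℤ) + n + 1 := by ring
        rw [hi3]
    have hSz : (R (-(k : ℤ) - 1)).comp (A₀.comp (R (j : ℤ))) = 0 := by
      apply aux_op_zero _ (d * (s + ε) ^ (k + 1) * ‖A₀‖ * c / (r - ε) ^ j) a ha0 ha1
      intro n
      rw [shift n]
      have hcast1 : ((j : ℤ) + n) = ((j + n : ℕ) : ℤ) := by push_cast; ring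
      have hcast2 : (-(k : ℤ) - 1 - n) = -((k + 1 + n : ℕ) : ℤ) := by push_cast; ring
      rw [hcast1, hcast2]
      have b1 := (hbd (j + n)).1
      have b2 := (hbd (k + 1 + n)).2
      calc ‖(R (-((k + 1 + n : ℕ) : ℤ))).comp (A₀.comp (R ((j + n : ℕ) : ℤ)))‖
          ≤ ‖R (-((k + 1 + n : ℕ) : ℤ))‖ * (‖A₀‖ * ‖R ((j + n : ℕ) : ℤ)‖) := by
            refine (ContinuousLinearMap.opNorm_comp_le _ _).trans ?_
            gcongr
            exact ContinuousLinearMap.opNorm_comp_le _ _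
        _ ≤ (d * (s + ε) ^ (k + 1 + n)) * (‖A₀‖ * (c / (r - ε) ^ (j + n))) := by
            gcongr
        _ = d * (s + ε) ^ (k + 1) * ‖A₀‖ * c / (r - ε) ^ j * a ^ n := by
            rw [hadef, div_pow, pow_add, pow_add, pow_add]
            field_simp
    intro x
    have := ContinuousLinearMap.ext_iff.mp hSz x
    simpa using this
  -- positive closed form
  have posForm : ∀ j : ℕ, R (j : ℤ) =
      ((-1 : ℂ) ^ j) • ((((R 0).comp A₁) ^ j).comp (R 0)) := by
    intro j
    induction j with
    | zero => ext x; norm_num [ContinuousLinearMap.one_def]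
    | succ j ih =>
      have key : R ((j : ℤ) + 1) = -(((R (j : ℤ)).comp A₁).comp (R 0)) := by
        ext x
        have hx := hI x
        have expand : R ((j:ℤ)+1) x
            = R ((j:ℤ)+1) (A₁ (R (-1) x)) + R ((j:ℤ)+1) (A₀ (R 0 x)) := by
          rw [← map_add, hx]
        have t0 : R ((j:ℤ)+1) (A₁ (R (-1) x)) = 0 := by
          have h := Tzero (j+1) 0 x
          push_cast at h
          norm_num at h
          exact h
        have l1 := L ((j:ℤ)+1) (by omega) (R 0 x)
        have hi : ((j:ℤ)+1-1) = (j:ℤ) := by ring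
        rw [hi] at l1
        have e : R ((j:ℤ)+1) (A₀ (R 0 x)) = -(R (j:ℤ) (A₁ (R 0 x))) :=
          eq_neg_of_add_eq_zero_right l1
        simp [expand, t0, e, ContinuousLinearMap.comp_apply]
      have hcast : ((j+1 : ℕ) : ℤ) = (j:ℤ)+1 := by push_cast; ring
      rw [hcast, key, ih]
      ext x
      simp only [ContinuousLinearMap.neg_apply, ContinuousLinearMap.comp_apply,
        ContinuousLinearMap.smul_comp, ContinuousLinearMap.smul_apply,
        pow_succ, ContinuousLinearMap.mul_apply]
      rw [mul_smul]
      simp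
  -- negative closed form
  have negForm : ∀ k : ℕ, R (-(k : ℤ) - 1) =
      ((-1 : ℂ) ^ k) • ((((R (-1)).comp A₀) ^ k).comp (R (-1))) := by
    intro k
    induction k with
    | zero => ext x; norm_num [ContinuousLinearMap.one_def]
    | succ k ih =>
      have key : R (-(k:ℤ)-2) = -(((R (-(k:ℤ)-1)).comp A₀).comp (R (-1))) := by
        ext x
        have hx := hI x
        have expand : R (-(k:ℤ)-2) x
            = R (-(k:ℤ)-2) (A₁ (R (-1) x)) + R (-(k:ℤ)-2) (A₀ (R 0 x)) := by
          rw [← map_add, hx]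
        have s0 : R (-(k:ℤ)-2) (A₀ (R 0 x)) = 0 := by
          have h := Szero (k+1) 0 x
          push_cast at h
          have hi : (-((k:ℤ)+1)-1) = -(k:ℤ)-2 := by ring
          rw [hi] at h
          exact h
        have l1 := L (-(k:ℤ)-1) (by omega) (R (-1) x)
        have hi2 : (-(k:ℤ)-1-1) = -(k:ℤ)-2 := by ring
        rw [hi2] at l1
        have e : R (-(k:ℤ)-2) (A₁ (R (-1) x)) = -(R (-(k:ℤ)-1) (A₀ (R (-1) x))) :=
          eq_neg_of_add_eq_zero_left l1
        simp [expand, s0, e, ContinuousLinearMap.comp_apply]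
      have hcast : (-((k+1 : ℕ) : ℤ) - 1) = -(k:ℤ)-2 := by push_cast; ring
      rw [hcast, key, ih]
      ext x
      simp only [ContinuousLinearMap.neg_apply, ContinuousLinearMap.comp_apply,
        ContinuousLinearMap.smul_comp, ContinuousLinearMap.smul_apply,
        pow_succ, ContinuousLinearMap.mul_apply]
      rw [mul_smul]
      simp
  -- conclusion
  intro j hj
  obtain ⟨k, rfl⟩ : ∃ k, j = k + 1 := ⟨j - 1, by omega⟩
  constructor
  · have hidx : (-((k+1 : ℕ) : ℤ)) = -(k:ℤ) - 1 := by push_cast; ring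
    rw [hidx]
    simpa only [Nat.add_sub_cancel] using negForm k
  · exact posForm (k+1)
end

section
/- Suppose {R_j}_{j∈ℤ} ⊆ L(K,H) satisfy the fundamental equations and geometric bounds on U_{s,r}. Then limsup_{j→∞} ‖(R_{-1}A_0)^j‖^{1/j} ≤ s and limsup_{j→∞} ‖(R_0 A_1)^j‖^{1/j} ≤ 1/r. -/
open Filter Topology

private lemma aux_nonneg_zero {x K q : ℝ} (hx : 0 ≤ x) (hq0 : 0 ≤ q) (hq1 : q < 1)
    (h : ∀ k : ℕ, x ≤ K * q ^ k) : x = 0 := by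
  have ht : Tendsto (fun k : ℕ => K * q ^ k) atTop (𝓝 0) := by
    simpa using (tendsto_pow_atTop_nhds_zero_of_lt_one hq0 hq1).const_mul K
  have hle : x ≤ 0 := ge_of_tendsto ht (Eventually.of_forall h)
  linarith

private lemma aux_limsup {f : ℕ → ℝ} {C a : ℝ} (hC : 0 < C) (ha : 0 ≤ a)
    (h0 : ∀ n, 0 ≤ f n) (hb : ∀ n : ℕ, 1 ≤ n → f n ≤ C * a ^ n) :
    limsup (fun n : ℕ => f n ^ ((n : ℝ)⁻¹)) atTop ≤ a := by
  have hn : Tendsto (fun n : ℕ => ((n : ℝ))⁻¹) atTop (𝓝 0) :=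
    tendsto_inv_atTop_zero.comp tendsto_natCast_atTop_atTop
  have h1 : Tendsto (fun n : ℕ => C ^ ((n : ℝ)⁻¹)) atTop (𝓝 1) := by
    simpa using tendsto_const_nhds.rpow hn (Or.inl hC.ne')
  have hg : Tendsto (fun n : ℕ => C ^ ((n : ℝ)⁻¹) * a) atTop (𝓝 a) := by
    simpa using h1.mul_const a
  have hev : ∀ᶠ n : ℕ in atTop, f n ^ ((n : ℝ)⁻¹) ≤ C ^ ((n : ℝ)⁻¹) * a := by
    filter_upwards [eventually_ge_atTop 1] with n hn1
    calc f n ^ ((n : ℝ)⁻¹) ≤ (C * a ^ n) ^ ((n : ℝ)⁻¹) :=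
          Real.rpow_le_rpow (h0 n) (hb n hn1) (by positivity)
      _ = C ^ ((n : ℝ)⁻¹) * (a ^ n) ^ ((n : ℝ)⁻¹) := Real.mul_rpow hC.le (by positivity)
      _ = C ^ ((n : ℝ)⁻¹) * a := by
          rw [Real.pow_rpow_inv_natCast ha (by omega)]
  have hcb : IsCoboundedUnder (· ≤ ·) atTop (fun n : ℕ => f n ^ ((n : ℝ)⁻¹)) := by
    apply Filter.IsBoundedUnder.isCoboundedUnder_le
    exact isBoundedUnder_of ⟨0, fun n => Real.rpow_nonneg (h0 n) _⟩
  calc limsup (fun n : ℕ => f n ^ ((n : ℝ)⁻¹)) atTop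
      ≤ limsup (fun n : ℕ => C ^ ((n : ℝ)⁻¹) * a) atTop :=
        limsup_le_limsup hev hcb hg.isBoundedUnder_le
    _ = a := hg.limsup_eq

/-- `limsup_{j→∞} ‖(R₋₁A₀)^j‖^{1/j} ≤ s` and
`limsup_{j→∞} ‖(R₀A₁)^j‖^{1/j} ≤ 1/r`. -/
theorem spectral_radius_bounds
    {H K : Type*} [NormedAddCommGroup H] [NormedSpace ℂ H] [CompleteSpace H]
    [NormedAddCommGroup K] [NormedSpace ℂ K] [CompleteSpace K]
    (s r : ℝ) (hs : 0 ≤ s) (hsr : s < r)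
    (A₀ A₁ : H →L[ℂ] K) (R : ℤ → (K →L[ℂ] H))
    (hgb : ∀ δ ε : ℝ, 0 < δ → 0 < ε → s + ε < r - δ →
      ∃ c d : ℝ, 0 < c ∧ 0 < d ∧
        ∀ j : ℕ, ‖R (j : ℤ)‖ ≤ c / (r - δ) ^ j ∧ ‖R (-(j : ℤ))‖ ≤ d * (s + ε) ^ j)
    (hleft : ∀ j : ℤ, (R (j - 1)).comp A₁ + (R j).comp A₀ =
      if j = 0 then (1 : H →L[ℂ] H) else 0)
    (hright : ∀ j : ℤ, A₁.comp (R (j - 1)) + A₀.comp (R j) =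
      if j = 0 then (1 : K →L[ℂ] K) else 0) :
    limsup (fun j : ℕ => ‖((R (-1)).comp A₀) ^ j‖ ^ ((j : ℝ)⁻¹)) atTop ≤ s ∧
    limsup (fun j : ℕ => ‖((R 0).comp A₁) ^ j‖ ^ ((j : ℝ)⁻¹)) atTop ≤ 1 / r := by
  have hr : 0 < r := lt_of_le_of_lt hs hsr
  -- basic consequences of the fundamental equations
  have lA : ∀ j : ℤ, j ≠ 0 → (R j).comp A₀ = -((R (j - 1)).comp A₁) := by
    intro j hj
    have h := hleft j
    rw [if_neg hj] at h
    exact eq_neg_of_add_eq_zero_right h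
  have rA : ∀ j : ℤ, j ≠ 0 → A₀.comp (R j) = -(A₁.comp (R (j - 1))) := by
    intro j hj
    have h := hright j
    rw [if_neg hj] at h
    exact eq_neg_of_add_eq_zero_right h
  have h0r : A₁.comp (R (-1)) + A₀.comp (R 0) = 1 := by
    have h := hright 0
    rw [if_pos rfl] at h
    rwa [show (0:ℤ) - 1 = -1 by ring] at h
  have rr0 : A₁.comp (R (-1)) = 1 - A₀.comp (R 0) := eq_sub_of_add_eq h0r
  have rr0' : A₀.comp (R 0) = 1 - A₁.comp (R (-1)) := eq_sub_of_add_eq' h0r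
  -- a fixed choice of geometric bounds, used for the vanishing lemmas
  have he3pos : 0 < (r - s) / 3 := by linarith
  obtain ⟨c, d, hc, hd, hcd⟩ := hgb ((r - s) / 3) ((r - s) / 3) he3pos he3pos (by linarith)
  set e3 : ℝ := (r - s) / 3 with he3
  have hre3 : 0 < r - e3 := by rw [he3]; linarith
  have hse3 : 0 ≤ s + e3 := by rw [he3]; linarith
  have hslt : s + e3 < r - e3 := by rw [he3]; linarith
  set q : ℝ := (s + e3) / (r - e3) with hqdef
  have hq0 : 0 ≤ q := div_nonneg hse3 hre3.le
  have hq1 : q < 1 := (div_lt_one hre3).mpr hslt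
  -- vanishing lemma 1 : R₋ₘ A₀ R₀ = 0 for m ≥ 1
  have Z1 : ∀ m : ℕ, 1 ≤ m → (R (-(m:ℤ))).comp (A₀.comp (R 0)) = 0 := by
    intro m hm
    have key : ∀ k : ℕ, (R (-(m:ℤ))).comp (A₀.comp (R 0))
        = -((R (-(m:ℤ) - k - 1)).comp (A₁.comp (R (k:ℤ)))) := by
      intro k
      induction k with
      | zero =>
        have h1 : (R (-(m:ℤ))).comp A₀ = -((R (-(m:ℤ) - 1)).comp A₁) := lA _ (by omega)
        simp only [Nat.cast_zero, sub_zero]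
        rw [← ContinuousLinearMap.comp_assoc, h1, ContinuousLinearMap.neg_comp,
          ContinuousLinearMap.comp_assoc]
      | succ k ih =>
        have h2 : A₁.comp (R (k:ℤ)) = -(A₀.comp (R ((k:ℤ) + 1))) := by
          have h := rA ((k:ℤ) + 1) (by omega)
          rw [show (k:ℤ) + 1 - 1 = (k:ℤ) by ring] at h
          rw [h, neg_neg]
        have h3 : (R (-(m:ℤ) - k - 1)).comp A₀ = -((R (-(m:ℤ) - k - 2)).comp A₁) := by
          have h := lA (-(m:ℤ) - k - 1) (by omega)
          rwa [show -(m:ℤ) - k - 1 - 1 = -(m:ℤ) - k - 2 by ring] at h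
        rw [show (((k+1:ℕ)) : ℤ) = (k:ℤ) + 1 by push_cast; ring,
          show -(m:ℤ) - ((k:ℤ) + 1) - 1 = -(m:ℤ) - k - 2 by ring,
          ih, h2, ContinuousLinearMap.comp_neg, neg_neg, ← ContinuousLinearMap.comp_assoc,
          h3, ContinuousLinearMap.neg_comp, ContinuousLinearMap.comp_assoc]
    have hnorm : ∀ k : ℕ, ‖(R (-(m:ℤ))).comp (A₀.comp (R 0))‖
        ≤ (d * (s + e3) ^ (m+1) * ‖A₁‖ * c) * q ^ k := by
      intro k
      rw [key k, norm_neg]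
      have hbR : ‖R (-(m:ℤ) - k - 1)‖ ≤ d * (s + e3) ^ (m + k + 1) := by
        have h := (hcd (m + k + 1)).2
        rwa [show -((m+k+1:ℕ):ℤ) = -(m:ℤ) - k - 1 by push_cast; ring] at h
      have hbk : ‖R ((k:ℤ))‖ ≤ c / (r - e3) ^ k := (hcd k).1
      calc ‖(R (-(m:ℤ) - k - 1)).comp (A₁.comp (R (k:ℤ)))‖
          ≤ ‖R (-(m:ℤ) - k - 1)‖ * ‖A₁.comp (R (k:ℤ))‖ :=
            ContinuousLinearMap.opNorm_comp_le _ _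
        _ ≤ ‖R (-(m:ℤ) - k - 1)‖ * (‖A₁‖ * ‖R ((k:ℤ))‖) := by
            have := ContinuousLinearMap.opNorm_comp_le A₁ (R (k:ℤ))
            exact mul_le_mul_of_nonneg_left this (norm_nonneg _)
        _ ≤ (d * (s + e3) ^ (m + k + 1)) * (‖A₁‖ * (c / (r - e3) ^ k)) :=
            mul_le_mul hbR (mul_le_mul_of_nonneg_left hbk (norm_nonneg _))
              (mul_nonneg (norm_nonneg _) (norm_nonneg _))
              (mul_nonneg hd.le (pow_nonneg hse3 _))
        _ = (d * (s + e3) ^ (m+1) * ‖A₁‖ * c) * q ^ k := by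
            rw [hqdef, div_pow, show m + k + 1 = (m+1) + k by ring, pow_add]
            ring
    have h0 : ‖(R (-(m:ℤ))).comp (A₀.comp (R 0))‖ = 0 :=
      aux_nonneg_zero (norm_nonneg _) hq0 hq1 hnorm
    exact norm_eq_zero.mp h0
  -- vanishing lemma 2 : Rₙ A₁ R₋₁ = 0 for n ≥ 0
  have Z2 : ∀ n : ℕ, (R (n:ℤ)).comp (A₁.comp (R (-1))) = 0 := by
    intro n
    have key : ∀ k : ℕ, (R (n:ℤ)).comp (A₁.comp (R (-1)))
        = -((R ((n:ℤ) + k + 1)).comp (A₀.comp (R (-(k:ℤ) - 1)))) := by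
      intro k
      induction k with
      | zero =>
        have h1 : (R (n:ℤ)).comp A₁ = -((R ((n:ℤ) + 1)).comp A₀) := by
          have h := lA ((n:ℤ) + 1) (by omega)
          rw [show (n:ℤ) + 1 - 1 = (n:ℤ) by ring] at h
          rw [h, neg_neg]
        simp only [Nat.cast_zero, add_zero, neg_zero, zero_sub]
        rw [← ContinuousLinearMap.comp_assoc, h1, ContinuousLinearMap.neg_comp,
          ContinuousLinearMap.comp_assoc]
      | succ k ih =>
        have h2 : A₀.comp (R (-(k:ℤ) - 1)) = -(A₁.comp (R (-(k:ℤ) - 2))) := by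
          have h := rA (-(k:ℤ) - 1) (by omega)
          rwa [show -(k:ℤ) - 1 - 1 = -(k:ℤ) - 2 by ring] at h
        have h3 : (R ((n:ℤ) + k + 1)).comp A₁ = -((R ((n:ℤ) + k + 2)).comp A₀) := by
          have h := lA ((n:ℤ) + k + 2) (by omega)
          rw [show (n:ℤ) + k + 2 - 1 = (n:ℤ) + k + 1 by ring] at h
          rw [h, neg_neg]
        rw [show (((k+1:ℕ)) : ℤ) = (k:ℤ) + 1 by push_cast; ring,
          show (n:ℤ) + ((k:ℤ) + 1) + 1 = (n:ℤ) + k + 2 by ring,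
          show -((k:ℤ) + 1) - 1 = -(k:ℤ) - 2 by ring,
          ih, h2, ContinuousLinearMap.comp_neg, neg_neg, ← ContinuousLinearMap.comp_assoc,
          h3, ContinuousLinearMap.neg_comp, ContinuousLinearMap.comp_assoc]
    have hnorm : ∀ k : ℕ, ‖(R (n:ℤ)).comp (A₁.comp (R (-1)))‖
        ≤ (c / (r - e3) ^ (n+1) * ‖A₀‖ * (d * (s + e3))) * q ^ k := by
      intro k
      rw [key k, norm_neg]
      have hbR : ‖R ((n:ℤ) + k + 1)‖ ≤ c / (r - e3) ^ (n + k + 1) := by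
        have h := (hcd (n + k + 1)).1
        rwa [show ((n+k+1:ℕ):ℤ) = (n:ℤ) + k + 1 by push_cast; ring] at h
      have hbk : ‖R (-(k:ℤ) - 1)‖ ≤ d * (s + e3) ^ (k + 1) := by
        have h := (hcd (k + 1)).2
        rwa [show -((k+1:ℕ):ℤ) = -(k:ℤ) - 1 by push_cast; ring] at h
      calc ‖(R ((n:ℤ) + k + 1)).comp (A₀.comp (R (-(k:ℤ) - 1)))‖
          ≤ ‖R ((n:ℤ) + k + 1)‖ * ‖A₀.comp (R (-(k:ℤ) - 1))‖ :=
            ContinuousLinearMap.opNorm_comp_le _ _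
        _ ≤ ‖R ((n:ℤ) + k + 1)‖ * (‖A₀‖ * ‖R (-(k:ℤ) - 1)‖) := by
            have := ContinuousLinearMap.opNorm_comp_le A₀ (R (-(k:ℤ) - 1))
            exact mul_le_mul_of_nonneg_left this (norm_nonneg _)
        _ ≤ (c / (r - e3) ^ (n + k + 1)) * (‖A₀‖ * (d * (s + e3) ^ (k + 1))) :=
            mul_le_mul hbR (mul_le_mul_of_nonneg_left hbk (norm_nonneg _))
              (mul_nonneg (norm_nonneg _) (norm_nonneg _))
              (div_nonneg hc.le (pow_nonneg hre3.le _))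
        _ = (c / (r - e3) ^ (n+1) * ‖A₀‖ * (d * (s + e3))) * q ^ k := by
            rw [hqdef, div_pow, show n + k + 1 = (n+1) + k by ring, pow_add,
              show k + 1 = k + 1 from rfl, pow_succ]
            field_simp
            ring
    have h0 : ‖(R (n:ℤ)).comp (A₁.comp (R (-1)))‖ = 0 :=
      aux_nonneg_zero (norm_nonneg _) hq0 hq1 hnorm
    exact norm_eq_zero.mp h0
  -- step lemmas
  have SL1 : ∀ m : ℕ, ((R (-(m:ℤ) - 1)).comp A₀).comp (R (-1)) = -(R (-(m:ℤ) - 2)) := by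
    intro m
    have h1 : (R (-(m:ℤ) - 1)).comp A₀ = -((R (-(m:ℤ) - 2)).comp A₁) := by
      have h := lA (-(m:ℤ) - 1) (by omega)
      rwa [show -(m:ℤ) - 1 - 1 = -(m:ℤ) - 2 by ring] at h
    have hz : (R (-(m:ℤ) - 2)).comp (A₀.comp (R 0)) = 0 := by
      have h := Z1 (m + 2) (by omega)
      rwa [show -((m+2:ℕ):ℤ) = -(m:ℤ) - 2 by push_cast; ring] at h
    rw [h1, ContinuousLinearMap.neg_comp, ContinuousLinearMap.comp_assoc, rr0,
      ContinuousLinearMap.comp_sub, hz, sub_zero, ContinuousLinearMap.one_def,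
      ContinuousLinearMap.comp_id]
  have SL2 : ∀ n : ℕ, ((R (n:ℤ)).comp A₁).comp (R 0) = -(R ((n:ℤ) + 1)) := by
    intro n
    have h1 : (R (n:ℤ)).comp A₁ = -((R ((n:ℤ) + 1)).comp A₀) := by
      have h := lA ((n:ℤ) + 1) (by omega)
      rw [show (n:ℤ) + 1 - 1 = (n:ℤ) by ring] at h
      rw [h, neg_neg]
    have hz : (R ((n:ℤ) + 1)).comp (A₁.comp (R (-1))) = 0 := by
      have h := Z2 (n + 1)
      rwa [show ((n+1:ℕ):ℤ) = (n:ℤ) + 1 by push_cast; ring] at h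
    rw [h1, ContinuousLinearMap.neg_comp, ContinuousLinearMap.comp_assoc, rr0',
      ContinuousLinearMap.comp_sub, hz, sub_zero, ContinuousLinearMap.one_def,
      ContinuousLinearMap.comp_id]
  -- power identities
  have PI1 : ∀ n : ℕ, ((R (-1)).comp A₀) ^ (n + 1)
      = ((-1:ℂ) ^ n) • ((R (-(n:ℤ) - 1)).comp A₀) := by
    intro n
    induction n with
    | zero => simp
    | succ n ih =>
      have hmc : ((R (-(n:ℤ) - 1)).comp A₀) * ((R (-1)).comp A₀)
          = -((R (-(n:ℤ) - 2)).comp A₀) := by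
        show ((R (-(n:ℤ) - 1)).comp A₀).comp ((R (-1)).comp A₀) = _
        rw [← ContinuousLinearMap.comp_assoc, SL1 n, ContinuousLinearMap.neg_comp]
      rw [show (((n+1:ℕ)) : ℤ) = (n:ℤ) + 1 by push_cast; ring,
        show -((n:ℤ) + 1) - 1 = -(n:ℤ) - 2 by ring]
      calc ((R (-1)).comp A₀) ^ (n + 1 + 1)
          = ((R (-1)).comp A₀) ^ (n + 1) * ((R (-1)).comp A₀) := pow_succ _ _
        _ = ((-1:ℂ) ^ n • ((R (-(n:ℤ) - 1)).comp A₀)) * ((R (-1)).comp A₀) := by rw [ih]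
        _ = (-1:ℂ) ^ n • (((R (-(n:ℤ) - 1)).comp A₀) * ((R (-1)).comp A₀)) :=
            smul_mul_assoc _ _ _
        _ = (-1:ℂ) ^ n • (-((R (-(n:ℤ) - 2)).comp A₀)) := by rw [hmc]
        _ = ((-1:ℂ) ^ (n + 1)) • ((R (-(n:ℤ) - 2)).comp A₀) := by
            rw [pow_succ, mul_smul, neg_one_smul, smul_neg]
  have PI2 : ∀ n : ℕ, ((R 0).comp A₁) ^ (n + 1)
      = ((-1:ℂ) ^ n) • ((R (n:ℤ)).comp A₁) := by
    intro n
    induction n with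
    | zero => simp
    | succ n ih =>
      have hmc : ((R (n:ℤ)).comp A₁) * ((R 0).comp A₁)
          = -((R ((n:ℤ) + 1)).comp A₁) := by
        show ((R (n:ℤ)).comp A₁).comp ((R 0).comp A₁) = _
        rw [← ContinuousLinearMap.comp_assoc, SL2 n, ContinuousLinearMap.neg_comp]
      rw [show (((n+1:ℕ)) : ℤ) = (n:ℤ) + 1 by push_cast; ring]
      calc ((R 0).comp A₁) ^ (n + 1 + 1)
          = ((R 0).comp A₁) ^ (n + 1) * ((R 0).comp A₁) := pow_succ _ _
        _ = ((-1:ℂ) ^ n • ((R (n:ℤ)).comp A₁)) * ((R 0).comp A₁) := by rw [ih]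
        _ = (-1:ℂ) ^ n • (((R (n:ℤ)).comp A₁) * ((R 0).comp A₁)) := smul_mul_assoc _ _ _
        _ = (-1:ℂ) ^ n • (-((R ((n:ℤ) + 1)).comp A₁)) := by rw [hmc]
        _ = ((-1:ℂ) ^ (n + 1)) • ((R ((n:ℤ) + 1)).comp A₁) := by
            rw [pow_succ, mul_smul, neg_one_smul, smul_neg]
  constructor
  · -- first bound
    have htend : Tendsto (fun ε : ℝ => s + ε) (nhdsWithin 0 (Set.Ioi 0)) (𝓝 s) := by
      have h1 : Tendsto (fun ε : ℝ => s + ε) (𝓝 0) (𝓝 (s + 0)) :=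
        tendsto_const_nhds.add tendsto_id
      simpa using h1.mono_left nhdsWithin_le_nhds
    refine ge_of_tendsto htend ?_
    filter_upwards [Ioo_mem_nhdsGT_of_mem
      (Set.mem_Ico.mpr ⟨le_refl (0:ℝ), by linarith⟩ : (0:ℝ) ∈ Set.Ico 0 (r - s))] with ε hε
    obtain ⟨hε0, hεrs⟩ := hε
    have hδ : 0 < (r - s - ε) / 2 := by linarith
    have hlt : s + ε < r - (r - s - ε) / 2 := by linarith
    obtain ⟨c', d', hc', hd', h'⟩ := hgb ((r - s - ε) / 2) ε hδ hε0 hlt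
    refine aux_limsup (C := d' * (‖A₀‖ + 1)) (mul_pos hd' (by positivity)) (by linarith)
      (fun n => norm_nonneg _) ?_
    intro n hn
    obtain ⟨k, rfl⟩ : ∃ k, n = k + 1 := ⟨n - 1, by omega⟩
    rw [PI1 k, norm_smul ((-1:ℂ) ^ k) ((R (-(k:ℤ) - 1)).comp A₀)]
    have hone : ‖(-1:ℂ) ^ k‖ = 1 := by simp
    rw [hone, one_mul]
    have hbR : ‖R (-(k:ℤ) - 1)‖ ≤ d' * (s + ε) ^ (k + 1) := by
      have h := (h' (k + 1)).2
      rwa [show -((k+1:ℕ):ℤ) = -(k:ℤ) - 1 by push_cast; ring] at h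
    calc ‖(R (-(k:ℤ) - 1)).comp A₀‖
        ≤ ‖R (-(k:ℤ) - 1)‖ * ‖A₀‖ := ContinuousLinearMap.opNorm_comp_le _ _
      _ ≤ (d' * (s + ε) ^ (k + 1)) * (‖A₀‖ + 1) :=
          mul_le_mul hbR (by linarith [norm_nonneg A₀]) (norm_nonneg _)
            (mul_nonneg hd'.le (pow_nonneg (by linarith) _))
      _ = (d' * (‖A₀‖ + 1)) * (s + ε) ^ (k + 1) := by ring
  · -- second bound
    rw [one_div]
    have htend : Tendsto (fun δ : ℝ => (r - δ)⁻¹) (nhdsWithin 0 (Set.Ioi 0)) (𝓝 r⁻¹) := by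
      have h1 : Tendsto (fun δ : ℝ => r - δ) (𝓝 0) (𝓝 (r - 0)) :=
        tendsto_const_nhds.sub tendsto_id
      have h2 : Tendsto (fun δ : ℝ => (r - δ)⁻¹) (nhdsWithin 0 (Set.Ioi 0)) (𝓝 (r - 0)⁻¹) :=
        (h1.inv₀ (by rw [sub_zero]; exact hr.ne')).mono_left nhdsWithin_le_nhds
      simpa using h2
    refine ge_of_tendsto htend ?_
    filter_upwards [Ioo_mem_nhdsGT_of_mem
      (Set.mem_Ico.mpr ⟨le_refl (0:ℝ), by linarith⟩ : (0:ℝ) ∈ Set.Ico 0 (r - s))] with δ hδ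
    obtain ⟨hδ0, hδrs⟩ := hδ
    have hε : 0 < (r - s - δ) / 2 := by linarith
    have hlt : s + (r - s - δ) / 2 < r - δ := by linarith
    have hrδ : 0 < r - δ := by linarith
    obtain ⟨c', d', hc', hd', h'⟩ := hgb δ ((r - s - δ) / 2) hδ0 hε hlt
    refine aux_limsup (C := c' * (r - δ) * (‖A₁‖ + 1))
      (mul_pos (mul_pos hc' hrδ) (by positivity)) (inv_nonneg.mpr hrδ.le)
      (fun n => norm_nonneg _) ?_
    intro n hn
    obtain ⟨k, rfl⟩ : ∃ k, n = k + 1 := ⟨n - 1, by omega⟩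
    rw [PI2 k, norm_smul ((-1:ℂ) ^ k) ((R (k:ℤ)).comp A₁)]
    have hone : ‖(-1:ℂ) ^ k‖ = 1 := by simp
    rw [hone, one_mul]
    have hbR : ‖R ((k:ℤ))‖ ≤ c' / (r - δ) ^ k := (h' k).1
    calc ‖(R ((k:ℤ))).comp A₁‖
        ≤ ‖R ((k:ℤ))‖ * ‖A₁‖ := ContinuousLinearMap.opNorm_comp_le _ _
      _ ≤ (c' / (r - δ) ^ k) * (‖A₁‖ + 1) :=
          mul_le_mul hbR (by linarith [norm_nonneg A₁]) (norm_nonneg _)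
            (div_nonneg hc'.le (pow_nonneg hrδ.le _))
      _ = (c' * (r - δ) * (‖A₁‖ + 1)) * ((r - δ)⁻¹) ^ (k + 1) := by
          rw [inv_pow, pow_succ]
          field_simp
end

section
/- Suppose there exist R_{-1}, R_0 ∈ L(K,H) with (i) R_{-1}A_1 + R_0 A_0 = I and A_1 R_{-1} + A_0 R_0 = I; (ii) R_{-1}A_i R_0 = 0 and R_0 A_i R_{-1} = 0 for i = 0, 1; and (iii) limsup_{j→∞} ‖(R_{-1}A_0)^j‖^{1/j} ≤ s and limsup_{j→∞} ‖(R_0 A_1)^j‖^{1/j} ≤ 1/r. Then for every z with s < |z| < r, the operator R(z) = (Iz + R_{-1}A_0)^{-1}R_{-1} + (I + R_0 A_1 z)^{-1}R_0 is well defined and satisfies R(z)(A_0 + A_1 z) = I and (A_0 + A_1 z)R(z) = I. -/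
open Filter

lemma aux_isUnit_one_sub {E : Type*} [NormedRing E] [CompleteSpace E]
    (y : E) (n : ℕ) (h : ‖y ^ n‖ < 1) : IsUnit (1 - y) := by
  set g : E := ∑ k ∈ Finset.range n, y ^ k with hg
  have hgl : (1 - y) * g = 1 - y ^ n := by
    have := mul_geom_sum y n
    have h2 : (1 - y) * g = -((y - 1) * g) := by noncomm_ring
    rw [h2, this]; noncomm_ring
  have hgr : g * (1 - y) = 1 - y ^ n := by
    have := geom_sum_mul y n
    have h2 : g * (1 - y) = -(g * (y - 1)) := by noncomm_ring
    rw [h2, this]; noncomm_ring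
  set u : Eˣ := Units.oneSub (y ^ n) h with hu
  have huv : (u : E) = 1 - y ^ n := rfl
  have hcomm : Commute (1 - y) (u : E) := by
    rw [huv]
    exact (Commute.one_left _).sub_left ((Commute.one_right y).sub_right ((Commute.refl y).pow_right n))
  have hcomm' : Commute (1 - y) ((u⁻¹ : Eˣ) : E) := hcomm.units_inv_right
  refine ⟨⟨1 - y, g * ((u⁻¹ : Eˣ) : E), ?_, ?_⟩, rfl⟩
  · calc (1 - y) * (g * ((u⁻¹ : Eˣ) : E)) = ((1 - y) * g) * ((u⁻¹ : Eˣ) : E) := by rw [mul_assoc]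
      _ = (u : E) * ((u⁻¹ : Eˣ) : E) := by rw [hgl, huv]
      _ = 1 := u.mul_inv
  · calc (g * ((u⁻¹ : Eˣ) : E)) * (1 - y) = g * (((u⁻¹ : Eˣ) : E) * (1 - y)) := by rw [mul_assoc]
      _ = g * ((1 - y) * ((u⁻¹ : Eˣ) : E)) := by rw [hcomm'.eq]
      _ = (g * (1 - y)) * ((u⁻¹ : Eˣ) : E) := by rw [mul_assoc]
      _ = (u : E) * ((u⁻¹ : Eˣ) : E) := by rw [hgr, huv]
      _ = 1 := u.mul_inv

lemma aux_bdd {E : Type*} [NormedRing E] (T : E) :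
    IsBoundedUnder (· ≤ ·) atTop (fun j : ℕ => ‖T ^ j‖ ^ ((j : ℝ)⁻¹)) := by
  refine isBoundedUnder_of ⟨max 1 ‖T‖, fun j => ?_⟩
  rcases Nat.eq_zero_or_pos j with h0 | hj
  · simp [h0]
  · have h1 : ‖T ^ j‖ ^ ((j : ℝ)⁻¹) ≤ (‖T‖ ^ j) ^ ((j : ℝ)⁻¹) :=
      Real.rpow_le_rpow (norm_nonneg _) (norm_pow_le' T hj) (by positivity)
    have h2 : (‖T‖ ^ j) ^ ((j : ℝ)⁻¹) = ‖T‖ := by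
      rw [← Real.rpow_natCast ‖T‖ j, ← Real.rpow_mul (norm_nonneg _),
        mul_inv_cancel₀ (by exact_mod_cast hj.ne'), Real.rpow_one]
    calc ‖T ^ j‖ ^ ((j : ℝ)⁻¹) ≤ (‖T‖ ^ j) ^ ((j : ℝ)⁻¹) := h1
      _ = ‖T‖ := h2
      _ ≤ max 1 ‖T‖ := le_max_right _ _

lemma aux_exists_pow_lt {E : Type*} [NormedRing E] (T : E) (c : ℝ)
    (h : limsup (fun j : ℕ => ‖T ^ j‖ ^ ((j : ℝ)⁻¹)) atTop < c) :
    ∃ n : ℕ, n ≠ 0 ∧ ‖T ^ n‖ < c ^ n := by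
  have hev := eventually_lt_of_limsup_lt h (aux_bdd T)
  obtain ⟨n, hfn, hn1⟩ := (hev.and (eventually_ge_atTop 1)).exists
  refine ⟨n, by omega, ?_⟩
  have h0 : (0:ℝ) ≤ ‖T ^ n‖ := norm_nonneg _
  have hre : (‖T ^ n‖ ^ ((n:ℝ)⁻¹)) ^ n = ‖T ^ n‖ :=
    Real.rpow_inv_natCast_pow h0 (by omega)
  calc ‖T ^ n‖ = (‖T ^ n‖ ^ ((n:ℝ)⁻¹)) ^ n := hre.symm
    _ < c ^ n := pow_lt_pow_left₀ hfn (by positivity) (by omega)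


/-- a basic solution `{R₋₁, R₀}` yields the closed-form resolvent
`R(z) = (Iz + R₋₁A₀)⁻¹R₋₁ + (I + R₀A₁z)⁻¹R₀`, a two-sided inverse of `A₀ + A₁z`
for every `z` with `s < |z| < r`. -/
theorem basic_solution_gives_resolvent
    {H K : Type*} [NormedAddCommGroup H] [NormedSpace ℂ H] [CompleteSpace H]
    [NormedAddCommGroup K] [NormedSpace ℂ K] [CompleteSpace K]
    (s r : ℝ) (hs : 0 ≤ s) (hsr : s < r)
    (A₀ A₁ : H →L[ℂ] K) (Rm1 R0 : K →L[ℂ] H)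
    (h1 : Rm1.comp A₁ + R0.comp A₀ = 1)
    (h1' : A₁.comp Rm1 + A₀.comp R0 = 1)
    (h2 : ∀ Ai ∈ ({A₀, A₁} : Set (H →L[ℂ] K)),
      (Rm1.comp Ai).comp R0 = 0 ∧ (R0.comp Ai).comp Rm1 = 0)
    (h3 : limsup (fun j : ℕ => ‖(Rm1.comp A₀) ^ j‖ ^ ((j : ℝ)⁻¹)) atTop ≤ s)
    (h3' : limsup (fun j : ℕ => ‖(R0.comp A₁) ^ j‖ ^ ((j : ℝ)⁻¹)) atTop ≤ 1 / r) :
    ∀ z : ℂ, s < ‖z‖ → ‖z‖ < r →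
      ∃ B C : H →L[ℂ] H,
        B * (z • 1 + Rm1.comp A₀) = 1 ∧ (z • 1 + Rm1.comp A₀) * B = 1 ∧
        C * (1 + z • (R0.comp A₁)) = 1 ∧ (1 + z • (R0.comp A₁)) * C = 1 ∧
        (B.comp Rm1 + C.comp R0).comp (A₀ + z • A₁) = 1 ∧
        (A₀ + z • A₁).comp (B.comp Rm1 + C.comp R0) = 1 := by
  intro z hz1 hz2
  have hzpos : 0 < ‖z‖ := lt_of_le_of_lt hs hz1
  have hz0 : z ≠ 0 := norm_pos_iff.mp hzpos
  set T : H →L[ℂ] H := Rm1.comp A₀ with hT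
  set S : H →L[ℂ] H := R0.comp A₁ with hS
  -- unit for z•1 + T
  obtain ⟨n, hn0, hTn⟩ := aux_exists_pow_lt T ‖z‖ (lt_of_le_of_lt h3 hz1)
  have hyT : ‖(-(z⁻¹ • T)) ^ n‖ < 1 := by
    have hnn : ‖(-(z⁻¹ • T)) ^ n‖ = ‖(z⁻¹ • T) ^ n‖ := by
      rcases Nat.even_or_odd n with he | ho
      · rw [he.neg_pow]
      · rw [ho.neg_pow, norm_neg]
    rw [hnn, smul_pow]
    rw [norm_smul (z⁻¹ ^ n) (T ^ n), norm_pow, norm_inv]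
    calc ‖z‖⁻¹ ^ n * ‖T ^ n‖ < ‖z‖⁻¹ ^ n * ‖z‖ ^ n := by
          apply mul_lt_mul_of_pos_left hTn (by positivity)
      _ = 1 := by rw [← mul_pow, inv_mul_cancel₀ hzpos.ne', one_pow]
  have hu1 : IsUnit ((1 : H →L[ℂ] H) + z⁻¹ • T) := by
    have := aux_isUnit_one_sub (-(z⁻¹ • T)) n hyT
    rwa [sub_neg_eq_add] at this
  have hzu : IsUnit ((z • 1 : H →L[ℂ] H)) := by
    rw [show (z • 1 : H →L[ℂ] H) = algebraMap ℂ _ z from (Algebra.algebraMap_eq_smul_one z).symm]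
    exact (isUnit_iff_ne_zero.mpr hz0).map (algebraMap ℂ (H →L[ℂ] H))
  have hfact : z • (1 : H →L[ℂ] H) + T = (z • 1) * (1 + z⁻¹ • T) := by
    rw [smul_mul_assoc, one_mul, smul_add, smul_smul, mul_inv_cancel₀ hz0, one_smul]
  have hUB : IsUnit (z • (1 : H →L[ℂ] H) + T) := hfact ▸ hzu.mul hu1
  obtain ⟨u, hu⟩ := hUB
  set B : H →L[ℂ] H := ↑u⁻¹ with hBdef
  have hB1 : B * (z • 1 + T) = 1 := by rw [← hu]; exact u.inv_mul
  have hB2 : (z • 1 + T) * B = 1 := by rw [← hu]; exact u.mul_inv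
  -- unit for 1 + z • S
  have hrinv : 1 / r < 1 / ‖z‖ := one_div_lt_one_div_of_lt hzpos hz2
  obtain ⟨m, hm0, hSm⟩ := aux_exists_pow_lt S (1 / ‖z‖) (lt_of_le_of_lt h3' hrinv)
  have hyS : ‖(-(z • S)) ^ m‖ < 1 := by
    have hnn : ‖(-(z • S)) ^ m‖ = ‖(z • S) ^ m‖ := by
      rcases Nat.even_or_odd m with he | ho
      · rw [he.neg_pow]
      · rw [ho.neg_pow, norm_neg]
    rw [hnn, smul_pow]
    rw [norm_smul (z ^ m) (S ^ m), norm_pow]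
    calc ‖z‖ ^ m * ‖S ^ m‖ < ‖z‖ ^ m * (1 / ‖z‖) ^ m := by
          apply mul_lt_mul_of_pos_left hSm (by positivity)
      _ = 1 := by rw [← mul_pow, mul_one_div_cancel hzpos.ne', one_pow]
  have hUC : IsUnit ((1 : H →L[ℂ] H) + z • S) := by
    have := aux_isUnit_one_sub (-(z • S)) m hyS
    rwa [sub_neg_eq_add] at this
  obtain ⟨v, hv⟩ := hUC
  set C : H →L[ℂ] H := ↑v⁻¹ with hCdef
  have hC1 : C * (1 + z • S) = 1 := by rw [← hv]; exact v.inv_mul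
  have hC2 : (1 + z • S) * C = 1 := by rw [← hv]; exact v.mul_inv
  -- pointwise facts
  have h1p : ∀ y : H, Rm1 (A₁ y) + R0 (A₀ y) = y := fun y => by
    have := DFunLike.congr_fun h1 y; simpa using this
  have h1'p : ∀ w : K, A₁ (Rm1 w) + A₀ (R0 w) = w := fun w => by
    have := DFunLike.congr_fun h1' w; simpa using this
  have p00 : ∀ w : K, Rm1 (A₀ (R0 w)) = 0 := fun w => by
    have := DFunLike.congr_fun (h2 A₀ (by simp)).1 w; simpa using this
  have p10 : ∀ w : K, Rm1 (A₁ (R0 w)) = 0 := fun w => by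
    have := DFunLike.congr_fun (h2 A₁ (by simp)).1 w; simpa using this
  have p01 : ∀ w : K, R0 (A₀ (Rm1 w)) = 0 := fun w => by
    have := DFunLike.congr_fun (h2 A₀ (by simp)).2 w; simpa using this
  have p11 : ∀ w : K, R0 (A₁ (Rm1 w)) = 0 := fun w => by
    have := DFunLike.congr_fun (h2 A₁ (by simp)).2 w; simpa using this
  have hB1p : ∀ y : H, z • B y + B (Rm1 (A₀ y)) = y := fun y => by
    have := DFunLike.congr_fun hB1 y
    simpa [hT, ContinuousLinearMap.mul_apply, map_add, map_smul] using this
  have hB2p : ∀ y : H, z • B y + Rm1 (A₀ (B y)) = y := fun y => by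
    have := DFunLike.congr_fun hB2 y
    simpa [hT, ContinuousLinearMap.mul_apply] using this
  have hC1p : ∀ y : H, C y + z • C (R0 (A₁ y)) = y := fun y => by
    have := DFunLike.congr_fun hC1 y
    simpa [hS, ContinuousLinearMap.mul_apply, map_add, map_smul] using this
  have hC2p : ∀ y : H, C y + z • R0 (A₁ (C y)) = y := fun y => by
    have := DFunLike.congr_fun hC2 y
    simpa [hS, ContinuousLinearMap.mul_apply] using this
  refine ⟨B, C, hB1, hB2, hC1, hC2, ?_, ?_⟩
  · -- left inverse
    refine ContinuousLinearMap.ext fun x => ?_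
    have e1 : B (Rm1 (A₀ x)) = x - z • B x := eq_sub_of_add_eq' (hB1p x)
    have e2 : z • B (R0 (A₀ x)) = R0 (A₀ x) := by
      have h := hB1p (R0 (A₀ x))
      rwa [p00 (A₀ x), map_zero, add_zero] at h
    have e5 : z • B (Rm1 (A₁ x)) = z • B x - R0 (A₀ x) := by
      have hq : Rm1 (A₁ x) = x - R0 (A₀ x) := eq_sub_of_add_eq (h1p x)
      rw [hq, map_sub, smul_sub, e2]
    have e3 : z • C (R0 (A₁ x)) = x - C x := eq_sub_of_add_eq' (hC1p x)
    have e4 : C (Rm1 (A₁ x)) = Rm1 (A₁ x) := by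
      have h := hC1p (Rm1 (A₁ x))
      rwa [p11 (A₁ x), map_zero, smul_zero, add_zero] at h
    have e6 : C (R0 (A₀ x)) = C x - Rm1 (A₁ x) := by
      have hq : R0 (A₀ x) = x - Rm1 (A₁ x) := eq_sub_of_add_eq' (h1p x)
      rw [hq, map_sub, e4]
    have expand : ((B.comp Rm1 + C.comp R0).comp (A₀ + z • A₁)) x
        = B (Rm1 (A₀ x)) + z • B (Rm1 (A₁ x)) + (C (R0 (A₀ x)) + z • C (R0 (A₁ x))) := by
      simp [map_add, map_smul]
      abel
    rw [expand, e1, e5, e6, e3]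
    have hfin := h1p x
    have : x - z • B x + (z • B x - R0 (A₀ x)) + (C x - Rm1 (A₁ x) + (x - C x))
        = x + x - (Rm1 (A₁ x) + R0 (A₀ x)) := by abel
    rw [this, hfin, ContinuousLinearMap.one_apply]
    abel
  · -- right inverse
    refine ContinuousLinearMap.ext fun x => ?_
    set b : H := B (Rm1 x) with hb
    set c : H := C (R0 x) with hc
    have hα : z • b + Rm1 (A₀ b) = Rm1 x := hB2p (Rm1 x)
    have hβ : c + z • R0 (A₁ c) = R0 x := hC2p (R0 x)
    have f1 : R0 (A₀ b) = 0 := by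
      have happ : R0 (A₀ (z • b + Rm1 (A₀ b))) = R0 (A₀ (Rm1 x)) := by rw [hα]
      rw [p01 x, map_add, map_add, map_smul, map_smul, p01 (A₀ b), add_zero] at happ
      exact (smul_eq_zero.mp happ).resolve_left hz0
    have f2 : A₀ b = A₁ (Rm1 x) - z • A₁ b := by
      have h := h1'p (A₀ b)
      rw [f1, map_zero, add_zero] at h
      have hr : Rm1 (A₀ b) = Rm1 x - z • b := eq_sub_of_add_eq' hα
      rw [← h, hr, map_sub, map_smul]
    have g1 : Rm1 (A₁ c) = 0 := by
      have happ : Rm1 (A₁ (c + z • R0 (A₁ c))) = Rm1 (A₁ (R0 x)) := by rw [hβ]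
      rw [p10 x, map_add, map_add, map_smul, map_smul, p10 (A₁ c), smul_zero, add_zero] at happ
      exact happ
    have g2 : A₀ (R0 (A₁ c)) = A₁ c := by
      have h := h1'p (A₁ c)
      rwa [g1, map_zero, zero_add] at h
    have g3 : z • A₁ c = A₀ (R0 x) - A₀ c := by
      have : z • R0 (A₁ c) = R0 x - c := eq_sub_of_add_eq' hβ
      calc z • A₁ c = z • A₀ (R0 (A₁ c)) := by rw [g2]
        _ = A₀ (z • R0 (A₁ c)) := by rw [map_smul]
        _ = A₀ (R0 x) - A₀ c := by rw [this, map_sub]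
    have expand : ((A₀ + z • A₁).comp (B.comp Rm1 + C.comp R0)) x
        = A₀ b + z • A₁ b + (A₀ c + z • A₁ c) := by
      simp [hb, hc, map_add, map_smul]
    rw [expand, f2, g3]
    have hfin := h1'p x
    have : A₁ (Rm1 x) - z • A₁ b + z • A₁ b + (A₀ c + (A₀ (R0 x) - A₀ c))
        = A₁ (Rm1 x) + A₀ (R0 x) := by abel
    rw [this, hfin, ContinuousLinearMap.one_apply]
end

section
/- Let R_{-1}, R_0 ∈ L(K,H) be a basic solution (conditions (i)-(iii) of the previous statement) and define, for λ in the annulus 1/r < |λ| < 1/s, the operator 𝓡_λ = λ^{-1} R(-λ^{-1}) A_0 ∈ L(H), where R(z) = (Iz + R_{-1}A_0)^{-1}R_{-1} + (I + R_0 A_1 z)^{-1}R_0. Then 𝓡 satisfies the resolvent equation 𝓡_λ - 𝓡_μ = (μ - λ) 𝓡_λ 𝓡_μ for all λ, μ with 1/r < |λ|, |μ| < 1/s. -/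
open Filter

/-- with a basic solution `{R₋₁, R₀}` and `R(z)` the resolvent of the pencil
(`Res z` is a two-sided inverse of `A₀ + A₁z` on the annulus `s < |z| < r`), the operator
`𝓡_λ = λ⁻¹ R(-λ⁻¹) A₀` satisfies the resolvent equation
`𝓡_λ - 𝓡_μ = (μ - λ) 𝓡_λ 𝓡_μ` for `1/r < |λ|, |μ| < 1/s`
(written as `1 < r·|λ|` and `s·|λ| < 1` so as to cover the case `s = 0`). -/
theorem resolvent_equation
    {H K : Type*} [NormedAddCommGroup H] [NormedSpace ℂ H] [CompleteSpace H]
    [NormedAddCommGroup K] [NormedSpace ℂ K] [CompleteSpace K]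
    (s r : ℝ) (hs : 0 ≤ s) (hsr : s < r)
    (A₀ A₁ : H →L[ℂ] K) (Rm1 R0 : K →L[ℂ] H)
    (h1 : Rm1.comp A₁ + R0.comp A₀ = 1)
    (h1' : A₁.comp Rm1 + A₀.comp R0 = 1)
    (h2 : ∀ Ai ∈ ({A₀, A₁} : Set (H →L[ℂ] K)),
      (Rm1.comp Ai).comp R0 = 0 ∧ (R0.comp Ai).comp Rm1 = 0)
    (h3 : limsup (fun j : ℕ => ‖(Rm1.comp A₀) ^ j‖ ^ ((j : ℝ)⁻¹)) atTop ≤ s)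
    (h3' : limsup (fun j : ℕ => ‖(R0.comp A₁) ^ j‖ ^ ((j : ℝ)⁻¹)) atTop ≤ 1 / r)
    (Res : ℂ → (K →L[ℂ] H))
    (hRes : ∀ z : ℂ, s < ‖z‖ → ‖z‖ < r →
      (Res z).comp (A₀ + z • A₁) = 1 ∧ (A₀ + z • A₁).comp (Res z) = 1) :
    ∀ lam mu : ℂ, 1 < r * ‖lam‖ → s * ‖lam‖ < 1 → 1 < r * ‖mu‖ → s * ‖mu‖ < 1 →
      lam⁻¹ • ((Res (-lam⁻¹)).comp A₀) - mu⁻¹ • ((Res (-mu⁻¹)).comp A₀) =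
        (mu - lam) • ((lam⁻¹ • ((Res (-lam⁻¹)).comp A₀)).comp
          (mu⁻¹ • ((Res (-mu⁻¹)).comp A₀))) := by
  have hr : 0 < r := lt_of_le_of_lt hs hsr
  -- key: for each admissible `l`, `l⁻¹ • Res (-l⁻¹)` is a two-sided inverse of `l • A₀ - A₁`
  have key : ∀ l : ℂ, 1 < r * ‖l‖ → s * ‖l‖ < 1 →
      (l⁻¹ • Res (-l⁻¹)).comp (l • A₀ - A₁) = 1 ∧
      (l • A₀ - A₁).comp (l⁻¹ • Res (-l⁻¹)) = 1 := by
    intro l h1l h2l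
    have hlpos : 0 < ‖l‖ := by
      by_contra h
      push_neg at h
      have : ‖l‖ = 0 := le_antisymm h (norm_nonneg _)
      rw [this, mul_zero] at h1l; linarith
    have hl0 : l ≠ 0 := by simpa [norm_eq_zero] using hlpos.ne'
    have hinv : ‖l‖⁻¹ * ‖l‖ = 1 := inv_mul_cancel₀ hlpos.ne'
    have hz1 : s < ‖(-l⁻¹ : ℂ)‖ := by
      rw [norm_neg, norm_inv]
      nlinarith [hinv, hlpos, h2l]
    have hz2 : ‖(-l⁻¹ : ℂ)‖ < r := by
      rw [norm_neg, norm_inv]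
      nlinarith [hinv, hlpos, h1l]
    obtain ⟨hL, hR⟩ := hRes (-l⁻¹) hz1 hz2
    have hA : A₀ + (-l⁻¹) • A₁ = l⁻¹ • (l • A₀ - A₁) := by
      rw [smul_sub, smul_smul, inv_mul_cancel₀ hl0, one_smul, neg_smul, sub_eq_add_neg]
    constructor
    · calc (l⁻¹ • Res (-l⁻¹)).comp (l • A₀ - A₁)
          = (Res (-l⁻¹)).comp (l⁻¹ • (l • A₀ - A₁)) := by
            rw [ContinuousLinearMap.smul_comp, ContinuousLinearMap.comp_smul]
        _ = 1 := by rw [← hA]; exact hL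
    · calc (l • A₀ - A₁).comp (l⁻¹ • Res (-l⁻¹))
          = (l⁻¹ • (l • A₀ - A₁)).comp (Res (-l⁻¹)) := by
            rw [ContinuousLinearMap.smul_comp, ContinuousLinearMap.comp_smul]
        _ = 1 := by rw [← hA]; exact hR
  intro lam mu hlam1 hlam2 hmu1 hmu2
  obtain ⟨hL1, hL2⟩ := key lam hlam1 hlam2
  obtain ⟨hM1, hM2⟩ := key mu hmu1 hmu2
  set Sl : K →L[ℂ] H := lam⁻¹ • Res (-lam⁻¹) with hSl
  set Sm : K →L[ℂ] H := mu⁻¹ • Res (-mu⁻¹) with hSm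
  have hgoal_lhs :
      lam⁻¹ • ((Res (-lam⁻¹)).comp A₀) = Sl.comp A₀ := by
    rw [hSl, ContinuousLinearMap.smul_comp]
  have hgoal_lhs' :
      mu⁻¹ • ((Res (-mu⁻¹)).comp A₀) = Sm.comp A₀ := by
    rw [hSm, ContinuousLinearMap.smul_comp]
  rw [hgoal_lhs, hgoal_lhs']
  have hBd : (mu - lam) • A₀ = (mu • A₀ - A₁) - (lam • A₀ - A₁) := by
    rw [sub_smul]; abel
  calc Sl.comp A₀ - Sm.comp A₀
      = (Sl.comp (mu • A₀ - A₁)).comp (Sm.comp A₀) -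
        (Sl.comp (lam • A₀ - A₁)).comp (Sm.comp A₀) := by
        rw [hL1, ContinuousLinearMap.comp_assoc Sl,
          ← ContinuousLinearMap.comp_assoc (mu • A₀ - A₁), hM2]
        simp [ContinuousLinearMap.one_def]
    _ = (Sl.comp ((mu • A₀ - A₁) - (lam • A₀ - A₁))).comp (Sm.comp A₀) := by
        rw [← ContinuousLinearMap.sub_comp, ← ContinuousLinearMap.comp_sub]
    _ = (mu - lam) • ((Sl.comp A₀).comp (Sm.comp A₀)) := by
        rw [← hBd, ContinuousLinearMap.comp_smul, ContinuousLinearMap.smul_comp,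
          ContinuousLinearMap.smul_comp]
end

section
/- Let A(z) = A_0 + A_1 z be a linear pencil whose resolvent R(z) has a pole of order p at z = 0, with basic solution R_{-1}, R_0 satisfying the fundamental-equation conditions (in particular R_0 A_0 R_{-1} = 0), and let φ ∈ K satisfy (R_{-1}A_0)^{p-1}R_{-1}φ ≠ 0. Then the vectors x_j = (-1)^{p-j-1}(R_{-1}A_0)^{p-j-1}R_{-1}φ for j = 0,…,p-1 form a Jordan chain of length p for A(z): A_0 x_0 = 0 and A_1 x_{j-1} + A_0 x_j = 0 for j = 1,…,p-1. -/
/-- if the resolvent has a pole of order `p` at `z = 0` with basic solution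
`R₋₁, R₀` and `(R₋₁A₀)^{p-1}R₋₁ φ ≠ 0`, then the vectors
`x_j = (-1)^{p-j-1}(R₋₁A₀)^{p-j-1}R₋₁ φ`, `j = 0,…,p-1`, form a Jordan chain of length `p`
for the pencil `A(z) = A₀ + A₁z`: `A₀x₀ = 0` and `A₁x_{j-1} + A₀x_j = 0` for
`j = 1,…,p-1`. -/
theorem jordan_chain_from_pole
    {H K : Type*} [NormedAddCommGroup H] [NormedSpace ℂ H] [CompleteSpace H]
    [NormedAddCommGroup K] [NormedSpace ℂ K] [CompleteSpace K]
    (A₀ A₁ : H →L[ℂ] K) (Rm1 R0 : K →L[ℂ] H) (p : ℕ) (hp : 1 ≤ p)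
    (h1 : Rm1.comp A₁ + R0.comp A₀ = 1)
    (h1' : A₁.comp Rm1 + A₀.comp R0 = 1)
    (h2 : ∀ Ai ∈ ({A₀, A₁} : Set (H →L[ℂ] K)),
      (Rm1.comp Ai).comp R0 = 0 ∧ (R0.comp Ai).comp Rm1 = 0)
    (hpole : (Rm1.comp A₀) ^ p = 0)
    (hpole' : ((Rm1.comp A₀) ^ (p - 1)).comp Rm1 ≠ 0)
    (φ : K) (hφ : (((Rm1.comp A₀) ^ (p - 1)).comp Rm1) φ ≠ 0)
    (x : ℕ → H)
    (hx : ∀ j : ℕ, j ≤ p - 1 →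
      x j = ((-1 : ℂ) ^ (p - j - 1)) • ((((Rm1.comp A₀) ^ (p - j - 1)).comp Rm1) φ)) :
    A₀ (x 0) = 0 ∧ ∀ j : ℕ, 1 ≤ j → j ≤ p - 1 → A₁ (x (j - 1)) + A₀ (x j) = 0 := by

  obtain ⟨-, h2a'⟩ := h2 A₀ (Or.inl rfl)
  set T := Rm1.comp A₀ with hT
  have hz : ∀ (k : ℕ) (v : K), R0 (A₀ ((T ^ k) (Rm1 v))) = 0 := by
    intro k v
    cases k with
    | zero =>
      simpa using ContinuousLinearMap.ext_iff.mp h2a' v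
    | succ m =>
      have : (T ^ (m + 1)) (Rm1 v) = Rm1 (A₀ ((T ^ m) (Rm1 v))) := by
        rw [pow_succ']; rfl
      rw [this]
      simpa using ContinuousLinearMap.ext_iff.mp h2a' (A₀ ((T ^ m) (Rm1 v)))
  have key : ∀ (k : ℕ) (v : K), A₀ ((T ^ k) (Rm1 v)) = A₁ ((T ^ (k + 1)) (Rm1 v)) := by
    intro k v
    have h := ContinuousLinearMap.ext_iff.mp h1' (A₀ ((T ^ k) (Rm1 v)))
    simp only [ContinuousLinearMap.add_apply, ContinuousLinearMap.coe_comp',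
      Function.comp_apply, ContinuousLinearMap.one_apply] at h
    rw [hz k v, map_zero, add_zero] at h
    have hstep : (T ^ (k + 1)) (Rm1 v) = Rm1 (A₀ ((T ^ k) (Rm1 v))) := by
      rw [pow_succ']; rfl
    rw [hstep, h]
  constructor
  · rw [hx 0 (by omega)]
    simp only [ContinuousLinearMap.coe_comp', Function.comp_apply, map_smul]
    have h1p : p - 0 - 1 + 1 = p := by omega
    rw [key (p - 0 - 1) φ, h1p, hpole]
    simp
  · intro j hj1 hj2
    rw [hx (j - 1) (by omega), hx j (by omega)]
    set k := p - j - 1 with hk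
    have e1 : p - (j - 1) - 1 = k + 1 := by omega
    rw [e1]
    simp only [ContinuousLinearMap.coe_comp', Function.comp_apply, map_smul]
    rw [← key k φ]
    rw [pow_succ]
    ring_nf
    module
end

section
/- Let A(z) = A_0 + A_1 z have a resolvent with isolated singularities at distinct points z_1, …, z_m with basic solutions {R_{k,-1}, R_{k,0}} of the fundamental equations for the shifted pencils A(z) = (A_0 + A_1 z_k) + A_1(z - z_k) on punctured disks around each z_k. Define P_k = R_{k,-1}A_1 ∈ L(H) and Q_k = A_1 R_{k,-1} ∈ L(K). Then P_k P_ℓ = 0 and Q_k Q_ℓ = 0 whenever k ≠ ℓ. -/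
/-!
For each pole `z_k` put `T_k = -R_{k,-1}(A₀ + z_k A₁)`; the limsup hypothesis says that `T_k` is
quasinilpotent, so `X_k(z) = (z - z_k - T_k)⁻¹ R_{k,-1}` is holomorphic off `z_k` and vanishes at
infinity. The fundamental equations give `X_k(z) A(z) = P_k` and `A(z) X_k(z) = Q_k`, hence
`X_k(z) = P_k R(z)` and `X_ℓ(z) = R(z) Q_ℓ` off the poles, and so `X_k(z) Q_ℓ = P_k X_ℓ(z)`. The
left side is holomorphic off `z_k`, the right side off `z_ℓ`: together they form an entire function
vanishing at infinity, which is zero by Liouville. Since `z - z_k - T_k` is invertible,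
`R_{k,-1} A₁ R_{ℓ,-1} = 0`, and both identities follow.
-/

open Filter Topology Bornology

lemma norm_neg_pow {A : Type*} [NormedRing A] (a : A) (n : ℕ) : ‖(-a) ^ n‖ = ‖a ^ n‖ := by
  rcases n.even_or_odd with hn | hn
  · rw [hn.neg_pow]
  · rw [hn.neg_pow, norm_neg]

lemma add_smul_add_sub_smul {R M : Type*} [Ring R] [AddCommGroup M] [Module R M] (a b : M)
    (c w : R) : a + c • b + (w - c) • b = a + w • b := by
  rw [sub_smul]; abel

lemma mem_resolventSet_of_spectralRadius_eq_zero {𝕜 A : Type*} [NormedField 𝕜] [Ring A]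
    [Algebra 𝕜 A] {a : A} (ha : spectralRadius 𝕜 a = 0) {ζ : 𝕜} (hζ : ζ ≠ 0) :
    ζ ∈ resolventSet 𝕜 a :=
  spectrum.mem_resolventSet_of_spectralRadius_lt (by simpa [ha] using hζ)

lemma spectralRadius_eq_zero_of_limsup_le_zero {A : Type*} [NormedRing A] [NormedAlgebra ℂ A]
    [CompleteSpace A] {a : A}
    (h : limsup (fun n : ℕ => ‖a ^ n‖ ^ ((n : ℝ)⁻¹)) atTop ≤ 0) : spectralRadius ℂ a = 0 := by
  -- `limsup` in `ℝ` is a junk value unless the sequence is bounded above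
  have hbdd : IsBoundedUnder (· ≤ ·) atTop (fun n : ℕ => ‖a ^ n‖ ^ ((n : ℝ)⁻¹)) := by
    refine isBoundedUnder_of_eventually_le (a := ‖a‖) ?_
    filter_upwards [eventually_ge_atTop 1] with n hn
    calc ‖a ^ n‖ ^ ((n : ℝ)⁻¹) ≤ (‖a‖ ^ n) ^ ((n : ℝ)⁻¹) := by gcongr; exact norm_pow_le' a hn
      _ = ‖a‖ := Real.pow_rpow_inv_natCast (norm_nonneg a) (by omega)
  refine le_antisymm (ENNReal.le_of_forall_pos_le_add fun ε hε _ => ?_) bot_le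
  have hlt : ∀ᶠ n : ℕ in atTop, ‖a ^ n‖ ^ ((n : ℝ)⁻¹) < ε :=
    eventually_lt_of_limsup_lt (h.trans_lt (NNReal.coe_pos.2 hε)) hbdd
  rw [zero_add]
  refine le_of_tendsto (spectrum.pow_norm_pow_one_div_tendsto_nhds_spectralRadius a) ?_
  filter_upwards [hlt] with n hn
  rw [one_div, ← ENNReal.ofReal_coe_nnreal]
  exact ENNReal.ofReal_le_ofReal hn.le

section PrincipalPart

variable {𝕜 H K : Type*} [NontriviallyNormedField 𝕜] [NormedAddCommGroup H] [NormedSpace 𝕜 H]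
  [NormedAddCommGroup K] [NormedSpace 𝕜 K]

/-- With `R = R_{k,-1}`, `B = A₀ + z_k A₁` and `ζ = z - z_k`, this is the principal part
`∑ ζ^{-n-1} (-R B)^n R` of the resolvent at the pole `z_k`. -/
noncomputable def principalPart (R : K →L[𝕜] H) (B : H →L[𝕜] K) (ζ : 𝕜) : K →L[𝕜] H :=
  (resolvent (-(R.comp B)) ζ).comp R

variable {R R' : K →L[𝕜] H} {A B : H →L[𝕜] K} {ζ : 𝕜}

open ContinuousLinearMap

lemma principalPart_comp_add_smul (hζ : ζ ∈ resolventSet 𝕜 (-(R.comp B)))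
    (h1 : R.comp A + R'.comp B = 1) (h2 : (R.comp B).comp R' = 0) :
    (principalPart R B ζ).comp (B + ζ • A) = R.comp A := by
  have hRB : (R.comp B).comp (R.comp A) = R.comp B := by
    rw [eq_sub_of_add_eq h1, comp_sub, ← comp_assoc, h2, zero_comp, sub_zero, one_def, comp_id]
  have hfactor : R.comp (B + ζ • A) = (algebraMap 𝕜 _ ζ - -(R.comp B)) * R.comp A := by
    rw [sub_neg_eq_add, add_mul, Algebra.algebraMap_eq_smul_one, smul_one_mul, mul_def, hRB,
      comp_add, comp_smul, add_comm]
  rw [principalPart, resolvent, comp_assoc, hfactor, ← mul_def, ← mul_assoc,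
    Ring.inverse_mul_cancel _ hζ, one_mul]

lemma add_smul_comp_principalPart (hζ0 : ζ ≠ 0) (hζ : ζ ∈ resolventSet 𝕜 (-(R.comp B)))
    (h1' : A.comp R + B.comp R' = 1) (h2' : (R'.comp B).comp R = 0) :
    (B + ζ • A).comp (principalPart R B ζ) = A.comp R := by
  set Y := principalPart R B ζ
  set x := algebraMap 𝕜 (H →L[𝕜] H) ζ - -(R.comp B) with hx
  have hY : ζ • Y + R.comp (B.comp Y) = R := by
    calc ζ • Y + R.comp (B.comp Y) = (x * resolvent (-(R.comp B)) ζ).comp R := by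
          simp only [x, Y, principalPart, mul_def, sub_neg_eq_add, Algebra.algebraMap_eq_smul_one,
            add_comp, smul_comp, one_def, id_comp, comp_assoc]
      _ = R := by rw [resolvent, Ring.mul_inverse_cancel _ hζ, one_def, id_comp]
  have hCx : R'.comp B * x = ζ • R'.comp B := by
    rw [hx, sub_neg_eq_add, mul_add, Algebra.algebraMap_eq_smul_one, mul_smul_one, mul_def,
      ← comp_assoc, h2', zero_comp, add_zero]
  have hCY : R'.comp (B.comp Y) = 0 := by
    refine (smul_eq_zero.1 ?_).resolve_left hζ0
    calc ζ • R'.comp (B.comp Y) = (R'.comp B * x * resolvent (-(R.comp B)) ζ).comp R := by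
          rw [hCx, smul_mul_assoc, smul_comp, mul_def]; rfl
      _ = 0 := by rw [mul_assoc, resolvent, Ring.mul_inverse_cancel _ hζ, mul_one, h2']
  calc (B + ζ • A).comp Y = ζ • A.comp Y + (A.comp R + B.comp R').comp (B.comp Y) := by
        rw [h1', one_def, id_comp, add_comp, smul_comp, add_comm]
    _ = A.comp R := by
        rw [add_comp, comp_assoc B, hCY, comp_zero, add_zero, comp_assoc,
          ← comp_smul, ← comp_add, hY]

lemma principalPart_sub_eq_comp_rightInverse {A₀ A₁ : H →L[𝕜] K} {c w : 𝕜} {S : K →L[𝕜] H}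
    (hw : w - c ∈ resolventSet 𝕜 (-(R.comp (A₀ + c • A₁))))
    (h1 : R.comp A₁ + R'.comp (A₀ + c • A₁) = 1) (h2 : (R.comp (A₀ + c • A₁)).comp R' = 0)
    (hS : (A₀ + w • A₁).comp S = 1) :
    principalPart R (A₀ + c • A₁) (w - c) = (R.comp A₁).comp S := by
  rw [← principalPart_comp_add_smul hw h1 h2, add_smul_add_sub_smul, comp_assoc, hS, one_def,
    comp_id]

lemma principalPart_sub_eq_leftInverse_comp {A₀ A₁ : H →L[𝕜] K} {c w : 𝕜} {S : K →L[𝕜] H}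
    (hwc : w ≠ c) (hw : w - c ∈ resolventSet 𝕜 (-(R.comp (A₀ + c • A₁))))
    (h1' : A₁.comp R + (A₀ + c • A₁).comp R' = 1) (h2' : (R'.comp (A₀ + c • A₁)).comp R = 0)
    (hS : S.comp (A₀ + w • A₁) = 1) :
    principalPart R (A₀ + c • A₁) (w - c) = S.comp (A₁.comp R) := by
  rw [← add_smul_comp_principalPart (sub_ne_zero.2 hwc) hw h1' h2', add_smul_add_sub_smul,
    ← comp_assoc, hS, one_def, id_comp]

lemma comp_eq_zero_of_principalPart_comp_eq_zero {L : Type*} [NormedAddCommGroup L]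
    [NormedSpace 𝕜 L] {J : L →L[𝕜] K} (hζ : ζ ∈ resolventSet 𝕜 (-(R.comp B)))
    (h : (principalPart R B ζ).comp J = 0) : R.comp J = 0 := by
  set x := algebraMap 𝕜 (H →L[𝕜] H) ζ - -(R.comp B)
  calc R.comp J = (x * resolvent (-(R.comp B)) ζ).comp (R.comp J) := by
        rw [resolvent, Ring.mul_inverse_cancel _ hζ, one_def, id_comp]
    _ = 0 := by rw [mul_def, comp_assoc, ← comp_assoc _ R, ← principalPart, h, comp_zero]

variable [CompleteSpace H]

lemma differentiableAt_principalPart (hζ : ζ ∈ resolventSet 𝕜 (-(R.comp B))) :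
    DifferentiableAt 𝕜 (principalPart R B) ζ :=
  (spectrum.hasDerivAt_resolvent_const_left hζ).differentiableAt.clm_comp
    (differentiableAt_const R)

lemma tendsto_principalPart_cobounded :
    Tendsto (principalPart R B) (cobounded 𝕜) (𝓝 0) := by
  have := ((compL 𝕜 K H H).flip R).continuous.tendsto 0
  rw [map_zero] at this
  exact this.comp (spectrum.resolvent_tendsto_cobounded _)

end PrincipalPart

lemma eventually_nhdsNE_forall_ne {X ι : Type*} [TopologicalSpace X] [T1Space X] [Finite ι]
    {z : ι → X} (hz : Function.Injective z) (k : ι) : ∀ᶠ w in 𝓝[≠] z k, ∀ j, w ≠ z j := by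
  refine eventually_all.2 fun j => ?_
  rcases eq_or_ne j k with rfl | hj
  · exact self_mem_nhdsWithin
  · exact nhdsWithin_le_nhds (eventually_ne_nhds (hz.ne hj).symm)

theorem Complex.eq_zero_of_eventuallyEq_nhdsNE_of_tendsto_cobounded {E : Type*}
    [NormedAddCommGroup E] [NormedSpace ℂ E] {f g : ℂ → E} {c : ℂ}
    (hf : ∀ w, w ≠ c → DifferentiableAt ℂ f w) (hg : DifferentiableAt ℂ g c)
    (hfg : f =ᶠ[𝓝[≠] c] g) (hf0 : Tendsto f (cobounded ℂ) (𝓝 0)) {w : ℂ} (hw : w ≠ c) :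
    f w = 0 := by
  set F := Function.update f c (g c)
  have hFf : ∀ w, w ≠ c → F w = f w := fun w hw => Function.update_of_ne hw _ _
  have hF : Differentiable ℂ F := by
    intro w
    rcases eq_or_ne w c with rfl | hw
    · refine hg.congr_of_eventuallyEq ?_
      filter_upwards [eventually_nhdsWithin_iff.1 hfg] with v hv
      rcases eq_or_ne v w with rfl | hvw
      · exact Function.update_self _ _ _
      · rw [hFf v hvw, hv hvw]
    · exact (hf w hw).congr_of_eventuallyEq
        ((eventually_ne_nhds hw).mono fun v hv => hFf v hv)
  have hF0 : Tendsto F (cocompact ℂ) (𝓝 0) := by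
    rw [← Metric.cobounded_eq_cocompact]
    exact hf0.congr' ((eventually_ne_cobounded c).mono fun v hv => (hFf v hv).symm)
  rw [← hFf w hw]
  exact hF.apply_eq_of_tendsto_cocompact w hF0

section Residue

variable {H K L : Type*} [NormedAddCommGroup H] [NormedSpace ℂ H] [CompleteSpace H]
  [NormedAddCommGroup K] [NormedSpace ℂ K] [NormedAddCommGroup L] [NormedSpace ℂ L]
  {R : K →L[ℂ] H} {B : H →L[ℂ] K} {c : ℂ}

open ContinuousLinearMap

lemma differentiableAt_principalPart_sub (hR : spectralRadius ℂ (-(R.comp B)) = 0) {w : ℂ}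
    (hw : w ≠ c) : DifferentiableAt ℂ (fun w => principalPart R B (w - c)) w :=
  (differentiableAt_principalPart (mem_resolventSet_of_spectralRadius_eq_zero hR
    (sub_ne_zero.2 hw))).comp w (differentiableAt_id.sub_const c)

lemma comp_eq_zero_of_principalPart_comp_eventuallyEq
    (hR : spectralRadius ℂ (-(R.comp B)) = 0) {J : L →L[ℂ] K} {g : ℂ → (L →L[ℂ] H)}
    (hg : DifferentiableAt ℂ g c)
    (hJ : (fun w => (principalPart R B (w - c)).comp J) =ᶠ[𝓝[≠] c] g) : R.comp J = 0 := by
  have hc : c + 1 ≠ c := by simp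
  refine comp_eq_zero_of_principalPart_comp_eq_zero (ζ := c + 1 - c)
    (mem_resolventSet_of_spectralRadius_eq_zero hR (sub_ne_zero.2 hc)) ?_
  refine Complex.eq_zero_of_eventuallyEq_nhdsNE_of_tendsto_cobounded
    (fun w hw => (differentiableAt_principalPart_sub hR hw).clm_comp (differentiableAt_const J))
    hg hJ ?_ hc
  have hcomp := ((compL ℂ L K H).flip J).continuous.tendsto 0
  rw [map_zero] at hcomp
  exact hcomp.comp (tendsto_principalPart_cobounded.comp (tendsto_sub_const_cobounded c))

end Residue

theorem projections_annihilate_general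
    {H K : Type*} [NormedAddCommGroup H] [NormedSpace ℂ H] [CompleteSpace H]
    [NormedAddCommGroup K] [NormedSpace ℂ K]
    (A₀ A₁ : H →L[ℂ] K) (m : ℕ) (z : Fin m → ℂ) (hz : Function.Injective z)
    (Res : ℂ → (K →L[ℂ] H))
    (hRes : ∀ w : ℂ, (∀ k, w ≠ z k) →
      (Res w).comp (A₀ + w • A₁) = 1 ∧ (A₀ + w • A₁).comp (Res w) = 1)
    (Rm1 R0 : Fin m → (K →L[ℂ] H))
    (h1 : ∀ k, (Rm1 k).comp A₁ + (R0 k).comp (A₀ + z k • A₁) = 1)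
    (h1' : ∀ k, A₁.comp (Rm1 k) + (A₀ + z k • A₁).comp (R0 k) = 1)
    (h2 : ∀ k, ∀ Ai ∈ ({A₀ + z k • A₁, A₁} : Set (H →L[ℂ] K)),
      ((Rm1 k).comp Ai).comp (R0 k) = 0 ∧ ((R0 k).comp Ai).comp (Rm1 k) = 0)
    (h3 : ∀ k, limsup
      (fun j : ℕ => ‖((Rm1 k).comp (A₀ + z k • A₁)) ^ j‖ ^ ((j : ℝ)⁻¹)) atTop ≤ 0) :
    ∀ k ℓ, k ≠ ℓ →
      ((Rm1 k).comp A₁).comp ((Rm1 ℓ).comp A₁) = 0 ∧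
      (A₁.comp (Rm1 k)).comp (A₁.comp (Rm1 ℓ)) = 0 := by
  set X : Fin m → ℂ → (K →L[ℂ] H) := fun k w => principalPart (Rm1 k) (A₀ + z k • A₁) (w - z k)
  have hqn : ∀ k, spectralRadius ℂ (-((Rm1 k).comp (A₀ + z k • A₁))) = 0 := fun k =>
    spectralRadius_eq_zero_of_limsup_le_zero (by simpa only [norm_neg_pow] using h3 k)
  have hρ : ∀ k w, w ≠ z k → w - z k ∈ resolventSet ℂ (-((Rm1 k).comp (A₀ + z k • A₁))) :=
    fun k w hw => mem_resolventSet_of_spectralRadius_eq_zero (hqn k) (sub_ne_zero.2 hw)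
  have hleft : ∀ k w, (∀ j, w ≠ z j) → X k w = ((Rm1 k).comp A₁).comp (Res w) := fun k w hw =>
    principalPart_sub_eq_comp_rightInverse (hρ k w (hw k)) (h1 k)
      (h2 k _ (Set.mem_insert _ _)).1 (hRes w hw).2
  have hright : ∀ k w, (∀ j, w ≠ z j) → X k w = (Res w).comp (A₁.comp (Rm1 k)) := fun k w hw =>
    principalPart_sub_eq_leftInverse_comp (hw k) (hρ k w (hw k)) (h1' k)
      (h2 k _ (Set.mem_insert _ _)).2 (hRes w hw).1
  have key : ∀ k ℓ, k ≠ ℓ → (Rm1 k).comp (A₁.comp (Rm1 ℓ)) = 0 := by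
    intro k ℓ hkl
    refine comp_eq_zero_of_principalPart_comp_eventuallyEq (hqn k)
      ((differentiableAt_const ((Rm1 k).comp A₁)).clm_comp
        (differentiableAt_principalPart_sub (hqn ℓ) (hz.ne hkl))) ?_
    filter_upwards [eventually_nhdsNE_forall_ne hz k] with w hw
    change (X k w).comp _ = ((Rm1 k).comp A₁).comp (X ℓ w)
    rw [hleft k w hw, hright ℓ w hw, ContinuousLinearMap.comp_assoc]
  intro k ℓ hkl
  constructor <;> ext x
  · simpa using congrArg (fun T => T (A₁ x)) (key k ℓ hkl)
  · simpa using congrArg (fun T => A₁ (T x)) (key k ℓ hkl)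

/-- if the resolvent of `A(z) = A₀ + A₁z` is analytic except at distinct
points `z₁,…,z_m`, with basic solutions `{R_{k,-1}, R_{k,0}}` of the fundamental equations
for the shifted pencils `(A₀ + A₁z_k) + A₁(z - z_k)` on the punctured disks
`0 < |z - z_k| < min_{j≠k}|z_j - z_k|`, then the projections `P_k = R_{k,-1}A₁` and
`Q_k = A₁R_{k,-1}` satisfy `P_kP_ℓ = 0` and `Q_kQ_ℓ = 0` for `k ≠ ℓ`. -/
theorem projections_annihilate
    {H K : Type*} [NormedAddCommGroup H] [NormedSpace ℂ H] [CompleteSpace H]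
    [NormedAddCommGroup K] [NormedSpace ℂ K] [CompleteSpace K]
    (A₀ A₁ : H →L[ℂ] K) (m : ℕ) (z : Fin m → ℂ) (hz : Function.Injective z)
    (Res : ℂ → (K →L[ℂ] H))
    (hRes : ∀ w : ℂ, (∀ k, w ≠ z k) →
      (Res w).comp (A₀ + w • A₁) = 1 ∧ (A₀ + w • A₁).comp (Res w) = 1)
    (Rm1 R0 : Fin m → (K →L[ℂ] H))
    (h1 : ∀ k, (Rm1 k).comp A₁ + (R0 k).comp (A₀ + z k • A₁) = 1)
    (h1' : ∀ k, A₁.comp (Rm1 k) + (A₀ + z k • A₁).comp (R0 k) = 1)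
    (h2 : ∀ k, ∀ Ai ∈ ({A₀ + z k • A₁, A₁} : Set (H →L[ℂ] K)),
      ((Rm1 k).comp Ai).comp (R0 k) = 0 ∧ ((R0 k).comp Ai).comp (Rm1 k) = 0)
    (h3 : ∀ k, limsup
      (fun j : ℕ => ‖((Rm1 k).comp (A₀ + z k • A₁)) ^ j‖ ^ ((j : ℝ)⁻¹)) atTop ≤ 0)
    (h3' : ∀ k j, j ≠ k → limsup
      (fun n : ℕ => ‖((R0 k).comp A₁) ^ n‖ ^ ((n : ℝ)⁻¹)) atTop ≤ 1 / ‖z j - z k‖) :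
    ∀ k ℓ, k ≠ ℓ →
      ((Rm1 k).comp A₁).comp ((Rm1 ℓ).comp A₁) = 0 ∧
      (A₁.comp (Rm1 k)).comp (A₁.comp (Rm1 ℓ)) = 0 :=
  projections_annihilate_general A₀ A₁ m z hz Res hRes Rm1 R0 h1 h1' h2 h3
end

section
/- Let R_{-1}, R_0 ∈ L(K,H) be a basic solution for the linear pencil A(z) = A_0 + A_1 z on the annulus U_{s,r}, i.e., R_{-1}A_1 + R_0A_0 = I, A_1R_{-1} + A_0R_0 = I, R_{-1}A_iR_0 = R_0A_iR_{-1} = 0 for i = 0,1, with the spectral radius bounds. Then for z ∈ U_{s,r}, with P = R_{-1}A_1 and Q = A_1R_{-1}, the closed form satisfies P R(z) Q = (Iz + R_{-1}A_0)^{-1}R_{-1} and (I-P) R(z) (I-Q) = (I + R_0A_1 z)^{-1}R_0, where R(z) = A(z)^{-1}. -/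
/-!
Since the spectral radius of `R₋₁A₀` is at most `s < |z|` and that of `R₀A₁` at most
`1/r < 1/|z|`, both `zI + R₋₁A₀` and `I + zR₀A₁` are invertible. The relations of a basic
solution give the intertwinings `(zI + R₋₁A₀) P = R₋₁ A(z)` and `(I + zR₀A₁)(I - P) = R₀ A(z)`,
together with `R₋₁ Q = R₋₁` and `R₀ (I - Q) = R₀`. Composing with `R(z)` on the right and then
with `Q`, resp. `I - Q`, and inverting the left factor gives both formulas.
-/

open Filter

section Spectral

variable {A : Type*} [NormedRing A]

lemma isBoundedUnder_norm_pow_rpow_inv (a : A) :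
    IsBoundedUnder (· ≤ ·) atTop (fun j : ℕ => ‖a ^ j‖ ^ ((j : ℝ)⁻¹)) := by
  refine isBoundedUnder_of_eventually_le (a := ‖a‖) ?_
  filter_upwards [eventually_ne_atTop 0] with j hj
  calc ‖a ^ j‖ ^ ((j : ℝ)⁻¹) ≤ (‖a‖ ^ j) ^ ((j : ℝ)⁻¹) := by
        gcongr; exact norm_pow_le' a (Nat.pos_of_ne_zero hj)
    _ = ‖a‖ := Real.pow_rpow_inv_natCast (norm_nonneg a) hj

lemma limsup_norm_pow_rpow_inv_nonneg (a : A) :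
    0 ≤ limsup (fun j : ℕ => ‖a ^ j‖ ^ ((j : ℝ)⁻¹)) atTop :=
  le_limsup_of_frequently_le (Frequently.of_forall fun _ => by positivity)
    (isBoundedUnder_norm_pow_rpow_inv a)

variable [NormedAlgebra ℂ A] [CompleteSpace A]

lemma spectralRadius_lt_ofReal_of_limsup_lt (a : A) {t : ℝ}
    (h : limsup (fun j : ℕ => ‖a ^ j‖ ^ ((j : ℝ)⁻¹)) atTop < t) :
    spectralRadius ℂ a < ENNReal.ofReal t := by
  obtain ⟨t', hlt', ht't⟩ := exists_between h
  have hev := eventually_lt_of_limsup_lt hlt' (isBoundedUnder_norm_pow_rpow_inv a)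
  calc spectralRadius ℂ a ≤ ENNReal.ofReal t' := by
        refine le_of_tendsto (spectrum.pow_norm_pow_one_div_tendsto_nhds_spectralRadius a) ?_
        filter_upwards [hev] with j hj
        rw [one_div]
        exact ENNReal.ofReal_le_ofReal hj.le
    _ < ENNReal.ofReal t :=
        (ENNReal.ofReal_lt_ofReal_iff ((limsup_norm_pow_rpow_inv_nonneg a).trans_lt h)).2 ht't

lemma isUnit_smul_one_add_of_limsup_lt (a : A) {z : ℂ}
    (h : limsup (fun j : ℕ => ‖a ^ j‖ ^ ((j : ℝ)⁻¹)) atTop < ‖z‖) : IsUnit (z • 1 + a) := by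
  have hρ : spectralRadius ℂ a < ‖-z‖₊ := by
    rw [nnnorm_neg, ← enorm_eq_nnnorm, ← ofReal_norm]
    exact spectralRadius_lt_ofReal_of_limsup_lt a h
  have hunit := spectrum.mem_resolventSet_iff.mp (spectrum.mem_resolventSet_of_spectralRadius_lt hρ)
  rwa [Algebra.algebraMap_eq_smul_one, neg_smul, ← neg_add', IsUnit.neg_iff] at hunit

lemma isUnit_one_add_smul_of_limsup_lt (a : A) {z : ℂ} (hz : z ≠ 0)
    (h : limsup (fun j : ℕ => ‖a ^ j‖ ^ ((j : ℝ)⁻¹)) atTop < ‖z‖⁻¹) : IsUnit (1 + z • a) := by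
  have hρ : spectralRadius ℂ a < (‖-z‖₊ : ENNReal)⁻¹ := by
    rw [nnnorm_neg, ← enorm_eq_nnnorm, ← ofReal_norm,
      ← ENNReal.ofReal_inv_of_pos (norm_pos_iff.mpr hz)]
    exact spectralRadius_lt_ofReal_of_limsup_lt a h
  simpa [sub_eq_add_neg] using
    spectrum.isUnit_one_sub_smul_of_lt_inv_radius (ENNReal.lt_inv_iff_lt_inv.mp hρ)

end Spectral

section BasicSolution

open ContinuousLinearMap

variable {𝕜 : Type*} [NontriviallyNormedField 𝕜]

lemma comp_comp_eq_of_comp_eq {E F G G' : Type*} [NormedAddCommGroup E] [NormedSpace 𝕜 E]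
    [NormedAddCommGroup F] [NormedSpace 𝕜 F] [NormedAddCommGroup G] [NormedSpace 𝕜 G]
    [NormedAddCommGroup G'] [NormedSpace 𝕜 G'] {u B : E →L[𝕜] E} (hB : B * u = 1)
    {X : F →L[𝕜] E} {Y : G →L[𝕜] E} {A : F →L[𝕜] G} {Res : G →L[𝕜] F} {Q : G' →L[𝕜] G}
    {Y' : G' →L[𝕜] E} (hX : u.comp X = Y.comp A) (hRes : A.comp Res = 1)
    (hQ : Y.comp Q = Y') : (X.comp Res).comp Q = B.comp Y' := by
  calc (X.comp Res).comp Q = (B * u).comp ((X.comp Res).comp Q) := by rw [hB, one_def, id_comp]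
    _ = B.comp Y' := by
      rw [mul_def, comp_assoc, ← comp_assoc u, ← comp_assoc u, hX, comp_assoc Y, hRes, one_def,
        comp_id, hQ]

variable {H K : Type*} [NormedAddCommGroup H] [NormedSpace 𝕜 H]
  [NormedAddCommGroup K] [NormedSpace 𝕜 K] {A₀ A₁ : H →L[𝕜] K} {Rm1 R0 : K →L[𝕜] H}

lemma smul_one_add_comp_P (h1 : Rm1.comp A₁ + R0.comp A₀ = 1)
    (h : (Rm1.comp A₀).comp R0 = 0) (z : 𝕜) :
    (z • 1 + Rm1.comp A₀).comp (Rm1.comp A₁) = Rm1.comp (A₀ + z • A₁) := by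
  have hA₀P : (Rm1.comp A₀).comp (Rm1.comp A₁) = Rm1.comp A₀ := by
    rw [eq_sub_of_add_eq h1, comp_sub, one_def, comp_id, ← comp_assoc, h, zero_comp, sub_zero]
  rw [add_comp, hA₀P, smul_comp, one_def, id_comp, comp_add, comp_smul, add_comm]

lemma Rm1_comp_Q (h1' : A₁.comp Rm1 + A₀.comp R0 = 1) (h : (Rm1.comp A₀).comp R0 = 0) :
    Rm1.comp (A₁.comp Rm1) = Rm1 := by
  rw [eq_sub_of_add_eq h1', comp_sub, one_def, comp_id, ← comp_assoc, h, sub_zero]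

lemma one_add_smul_comp_one_sub_P (h1 : Rm1.comp A₁ + R0.comp A₀ = 1)
    (h : (R0.comp A₁).comp Rm1 = 0) (z : 𝕜) :
    (1 + z • R0.comp A₁).comp (1 - Rm1.comp A₁) = R0.comp (A₀ + z • A₁) := by
  have hA₁P : (R0.comp A₁).comp (1 - Rm1.comp A₁) = R0.comp A₁ := by
    rw [comp_sub, one_def, comp_id, ← comp_assoc, h, zero_comp, sub_zero]
  rw [add_comp, smul_comp, hA₁P, one_def, id_comp, ← one_def, ← h1, add_sub_cancel_left,
    comp_add, comp_smul]

lemma R0_comp_one_sub_Q (h : (R0.comp A₁).comp Rm1 = 0) : R0.comp (1 - A₁.comp Rm1) = R0 := by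
  rw [comp_sub, one_def, comp_id, ← comp_assoc, h, sub_zero]

end BasicSolution

theorem resolvent_closed_form_general
    {H K : Type*} [NormedAddCommGroup H] [NormedSpace ℂ H] [CompleteSpace H]
    [NormedAddCommGroup K] [NormedSpace ℂ K]
    (s r : ℝ) (hs : 0 ≤ s)
    (A₀ A₁ : H →L[ℂ] K) (Rm1 R0 : K →L[ℂ] H)
    (h1 : Rm1.comp A₁ + R0.comp A₀ = 1)
    (h1' : A₁.comp Rm1 + A₀.comp R0 = 1)
    (h2 : ∀ Ai ∈ ({A₀, A₁} : Set (H →L[ℂ] K)),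
      (Rm1.comp Ai).comp R0 = 0 ∧ (R0.comp Ai).comp Rm1 = 0)
    (h3 : limsup (fun j : ℕ => ‖(Rm1.comp A₀) ^ j‖ ^ ((j : ℝ)⁻¹)) atTop ≤ s)
    (h3' : limsup (fun j : ℕ => ‖(R0.comp A₁) ^ j‖ ^ ((j : ℝ)⁻¹)) atTop ≤ 1 / r)
    (Res : ℂ → (K →L[ℂ] H))
    (hRes : ∀ z : ℂ, s < ‖z‖ → ‖z‖ < r →
      (Res z).comp (A₀ + z • A₁) = 1 ∧ (A₀ + z • A₁).comp (Res z) = 1) :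
    ∀ z : ℂ, s < ‖z‖ → ‖z‖ < r →
      ∃ B C : H →L[ℂ] H,
        B * (z • 1 + Rm1.comp A₀) = 1 ∧ (z • 1 + Rm1.comp A₀) * B = 1 ∧
        C * (1 + z • (R0.comp A₁)) = 1 ∧ (1 + z • (R0.comp A₁)) * C = 1 ∧
        ((Rm1.comp A₁).comp (Res z)).comp (A₁.comp Rm1) = B.comp Rm1 ∧
        ((1 - Rm1.comp A₁).comp (Res z)).comp (1 - A₁.comp Rm1) = C.comp R0 := by
  intro z hz hzr
  have hz0 : 0 < ‖z‖ := hs.trans_lt hz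
  obtain ⟨u, hu⟩ := isUnit_smul_one_add_of_limsup_lt (Rm1.comp A₀) (h3.trans_lt hz)
  obtain ⟨v, hv⟩ := isUnit_one_add_smul_of_limsup_lt (R0.comp A₁) (norm_pos_iff.mp hz0)
    (h3'.trans_lt (by rw [one_div]; exact inv_strictAnti₀ hz0 hzr))
  obtain ⟨hRm1A₀R0, -⟩ := h2 A₀ (by simp)
  obtain ⟨-, hR0A₁Rm1⟩ := h2 A₁ (by simp)
  have hAR := (hRes z hz hzr).2
  refine ⟨↑u⁻¹, ↑v⁻¹, hu ▸ u.inv_mul, hu ▸ u.mul_inv, hv ▸ v.inv_mul, hv ▸ v.mul_inv, ?_, ?_⟩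
  · exact comp_comp_eq_of_comp_eq (hu ▸ u.inv_mul) (smul_one_add_comp_P h1 hRm1A₀R0 z) hAR
      (Rm1_comp_Q h1' hRm1A₀R0)
  · exact comp_comp_eq_of_comp_eq (hv ▸ v.inv_mul) (one_add_smul_comp_one_sub_P h1 hR0A₁Rm1 z)
      hAR (R0_comp_one_sub_Q hR0A₁Rm1)

/-- for a basic solution `{R₋₁, R₀}` on the annulus `U_{s,r}`, with
`P = R₋₁A₁`, `Q = A₁R₋₁` and `R(z)` the resolvent, the closed form holds:
`P R(z) Q = (Iz + R₋₁A₀)⁻¹ R₋₁` and `(I-P) R(z) (I-Q) = (I + R₀A₁z)⁻¹ R₀`. -/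
theorem resolvent_closed_form
    {H K : Type*} [NormedAddCommGroup H] [NormedSpace ℂ H] [CompleteSpace H]
    [NormedAddCommGroup K] [NormedSpace ℂ K] [CompleteSpace K]
    (s r : ℝ) (hs : 0 ≤ s) (hsr : s < r)
    (A₀ A₁ : H →L[ℂ] K) (Rm1 R0 : K →L[ℂ] H)
    (h1 : Rm1.comp A₁ + R0.comp A₀ = 1)
    (h1' : A₁.comp Rm1 + A₀.comp R0 = 1)
    (h2 : ∀ Ai ∈ ({A₀, A₁} : Set (H →L[ℂ] K)),
      (Rm1.comp Ai).comp R0 = 0 ∧ (R0.comp Ai).comp Rm1 = 0)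
    (h3 : limsup (fun j : ℕ => ‖(Rm1.comp A₀) ^ j‖ ^ ((j : ℝ)⁻¹)) atTop ≤ s)
    (h3' : limsup (fun j : ℕ => ‖(R0.comp A₁) ^ j‖ ^ ((j : ℝ)⁻¹)) atTop ≤ 1 / r)
    (Res : ℂ → (K →L[ℂ] H))
    (hRes : ∀ z : ℂ, s < ‖z‖ → ‖z‖ < r →
      (Res z).comp (A₀ + z • A₁) = 1 ∧ (A₀ + z • A₁).comp (Res z) = 1) :
    ∀ z : ℂ, s < ‖z‖ → ‖z‖ < r →
      ∃ B C : H →L[ℂ] H,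
        B * (z • 1 + Rm1.comp A₀) = 1 ∧ (z • 1 + Rm1.comp A₀) * B = 1 ∧
        C * (1 + z • (R0.comp A₁)) = 1 ∧ (1 + z • (R0.comp A₁)) * C = 1 ∧
        ((Rm1.comp A₁).comp (Res z)).comp (A₁.comp Rm1) = B.comp Rm1 ∧
        ((1 - Rm1.comp A₁).comp (Res z)).comp (1 - A₁.comp Rm1) = C.comp R0 :=
  resolvent_closed_form_general s r hs A₀ A₁ Rm1 R0 h1 h1' h2 h3 h3' Res hRes
end
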